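/- arXiv:1406.5744 — 11 statements merged into one kernel-verified Lean document; each statement's English description precedes it below -/
import Mathlib

section
/- Let v ∈ Hom(M,ℚ), let ρ ∈ Hom(M,ℚ) be nonzero, let e, θ ∈ M, s ∈ ℤ, d ∈ ℤ∖{0}, and φ ∈ K(t)∖{0}. Define K-derivations ∂_• and ∂ of K(t)[M] by ∂_•(Qχ^m) = d·(v(m)Q + tQ′)·t^s·χ^{m+e} and ∂(Qχ^m) = ρ(m)·φ·Q·χ^{m+θ}. Then ∂∘∂_• = ∂_•∘∂ if and only if ρ(e) = 0, v(θ) ∈ ℤ, and φ = λ·t^{−v(θ)} for some λ ∈ K∖{0}. -/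
/-!
On `Q χ^m` the commutator `∂ ∂_• - ∂_• ∂` equals
`d t^s (ρ(e) φ (v(m) Q + t Q') - ρ(m) Q (t φ' + v(θ) φ)) χ^{m+e+θ}`.
Taking `m = 0, Q = t` forces `ρ(e) = 0`, and then any `m` with `ρ(m) ≠ 0` gives the Euler equation
`t φ' + v(θ) φ = 0`. Writing `φ = p / q` in lowest terms, the Euler equation gives `p ∣ t p'` and
`q ∣ t q'`; since `t · d/dt` multiplies the `j`-th coefficient by `j`, in characteristic zero this
forces `p` and `q` to be monomials, so `φ = λ t^n`, and then `n = -v(θ)`.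
-/

open scoped Polynomial
open Polynomial (derivative)

namespace Polynomial

variable {R : Type*}

theorem coeff_X_mul_derivative [Semiring R] (p : R[X]) (j : ℕ) :
    (X * derivative p).coeff j = j * p.coeff j := by
  cases j with
  | zero => simp
  | succ j =>
    rw [coeff_X_mul, coeff_derivative, ← Nat.cast_succ]
    exact (Nat.cast_commute _ _).eq.symm

theorem natDegree_X_mul_derivative_le [Semiring R] (p : R[X]) :
    (X * derivative p).natDegree ≤ p.natDegree :=
  natDegree_le_iff_coeff_eq_zero.mpr fun j hj => by
    rw [coeff_X_mul_derivative, coeff_eq_zero_of_natDegree_lt hj, mul_zero]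

variable [CommRing R] [IsDomain R]

theorem exists_X_mul_derivative_eq_C_mul_of_dvd {p : R[X]} (hp : p ≠ 0)
    (h : p ∣ X * derivative p) : ∃ u : R, X * derivative p = C u * p := by
  obtain ⟨w, hw⟩ := h
  rcases eq_or_ne w 0 with rfl | hw0
  · exact ⟨0, by simpa using hw⟩
  have hdeg : p.natDegree + w.natDegree ≤ p.natDegree := by
    rw [← natDegree_mul hp hw0, ← hw]
    exact natDegree_X_mul_derivative_le p
  refine ⟨w.coeff 0, ?_⟩
  rw [hw, mul_comm, ← eq_C_of_natDegree_eq_zero (by omega)]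

theorem eq_C_leadingCoeff_mul_X_pow_of_X_mul_derivative_eq [CharZero R] {p : R[X]} {u : R}
    (h : X * derivative p = C u * p) : p = C p.leadingCoeff * X ^ p.natDegree := by
  have hu : ∀ j, p.coeff j ≠ 0 → u = j := fun j hj => by
    have hj' := congrArg (coeff · j) h
    simp only [coeff_X_mul_derivative, coeff_C_mul] at hj'
    exact (mul_right_cancel₀ hj hj').symm
  ext j
  rw [coeff_C_mul_X_pow]
  split_ifs with hj
  · rw [hj, leadingCoeff]
  · by_contra hne
    have hp : p ≠ 0 := by rintro rfl; exact hne (coeff_zero j)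
    exact hj (Nat.cast_injective ((hu j hne).symm.trans (hu _ (leadingCoeff_ne_zero.mpr hp))))

theorem eq_C_leadingCoeff_mul_X_pow_of_dvd_X_mul_derivative [CharZero R] {p : R[X]}
    (h : p ∣ X * derivative p) : p = C p.leadingCoeff * X ^ p.natDegree := by
  rcases eq_or_ne p 0 with rfl | hp
  · simp
  obtain ⟨u, hu⟩ := exists_X_mul_derivative_eq_C_mul_of_dvd hp h
  exact eq_C_leadingCoeff_mul_X_pow_of_X_mul_derivative_eq hu

end Polynomial

namespace RatFunc

variable {K : Type*} [Field K] {D : Derivation K (RatFunc K) (RatFunc K)}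

theorem derivation_algebraMap (hD : D X = 1) (p : K[X]) :
    D (algebraMap K[X] (RatFunc K) p) = algebraMap K[X] (RatFunc K) (derivative p) := by
  rw [← aeval_X_left_eq_algebraMap, ← aeval_X_left_eq_algebraMap, D.comp_aeval_eq, hD,
    smul_eq_mul, mul_one]

theorem X_mul_derivation_C_mul_zpow (hD : D X = 1) (a : K) (n : ℤ) :
    X * D (algebraMap K (RatFunc K) a * X ^ n) =
      (n : RatFunc K) * (algebraMap K (RatFunc K) a * X ^ n) := by
  rw [D.leibniz, D.map_algebraMap, D.leibniz_zpow, hD, smul_zero, add_zero, smul_eq_mul,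
    zsmul_eq_mul, smul_eq_mul, mul_one, zpow_sub_one₀ X_ne_zero]
  have hX : (X : RatFunc K) ≠ 0 := X_ne_zero
  field_simp

theorem X_mul_derivative_mul_sub_eq_of_X_mul_derivation_eq (hD : D X = 1) {φ : RatFunc K}
    {c : K} (h : X * D φ = algebraMap K (RatFunc K) c * φ) :
    Polynomial.X * (derivative φ.num * φ.denom - φ.num * derivative φ.denom) =
      Polynomial.C c * φ.num * φ.denom := by
  apply algebraMap_injective K
  have hq : algebraMap K[X] (RatFunc K) φ.denom ≠ 0 := algebraMap_ne_zero φ.denom_ne_zero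
  rw [← num_div_denom φ, D.leibniz_div, derivation_algebraMap hD, derivation_algebraMap hD] at h
  simp only [map_mul, map_sub, algebraMap_X, algebraMap_C, algebraMap_eq_C, smul_eq_mul] at h ⊢
  field_simp at h
  linear_combination h

theorem exists_eq_C_mul_X_zpow_of_X_mul_derivation_eq [CharZero K] (hD : D X = 1)
    {φ : RatFunc K} {c : K} (h : X * D φ = algebraMap K (RatFunc K) c * φ) :
    ∃ (a : K) (n : ℤ), φ = algebraMap K (RatFunc K) a * X ^ n := by
  have key := X_mul_derivative_mul_sub_eq_of_X_mul_derivation_eq hD h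
  have hcop : IsCoprime φ.num φ.denom := φ.isCoprime_num_denom
  have hnum : φ.num ∣ Polynomial.X * derivative φ.num := by
    refine hcop.dvd_of_dvd_mul_right
      ⟨Polynomial.X * derivative φ.denom + Polynomial.C c * φ.denom, ?_⟩
    linear_combination key
  have hdenom : φ.denom ∣ Polynomial.X * derivative φ.denom := by
    refine hcop.symm.dvd_of_dvd_mul_left
      ⟨Polynomial.X * derivative φ.num - Polynomial.C c * φ.num, ?_⟩
    linear_combination -key
  refine ⟨φ.num.leadingCoeff, φ.num.natDegree - φ.denom.natDegree, ?_⟩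
  have hnum' := Polynomial.eq_C_leadingCoeff_mul_X_pow_of_dvd_X_mul_derivative hnum
  have hdenom' := Polynomial.eq_C_leadingCoeff_mul_X_pow_of_dvd_X_mul_derivative hdenom
  rw [φ.monic_denom.leadingCoeff] at hdenom'
  set a := φ.num.leadingCoeff
  set k := φ.num.natDegree
  set m := φ.denom.natDegree
  rw [← num_div_denom φ, hnum', hdenom']
  simp only [map_mul, map_pow, algebraMap_C, algebraMap_X, algebraMap_eq_C, map_one, one_mul,
    zpow_sub₀ (X_ne_zero (K := K)), zpow_natCast, mul_div_assoc]

theorem X_mul_derivation_add_eq_zero_iff [CharZero K] (hD : D X = 1) {φ : RatFunc K}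
    (hφ : φ ≠ 0) (c : K) :
    X * D φ + algebraMap K (RatFunc K) c * φ = 0 ↔
      ∃ n : ℤ, (n : K) = c ∧ ∃ a : K, a ≠ 0 ∧ φ = algebraMap K (RatFunc K) a * X ^ (-n) := by
  constructor
  · intro h
    obtain ⟨a, z, rfl⟩ := exists_eq_C_mul_X_zpow_of_X_mul_derivation_eq hD (φ := φ) (c := -c)
      (by rw [map_neg]; linear_combination h)
    have ha : a ≠ 0 := by rintro rfl; simp at hφ
    rw [X_mul_derivation_C_mul_zpow hD, ← add_mul, mul_eq_zero, or_iff_left hφ,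
      ← map_intCast (algebraMap K (RatFunc K)), ← map_add,
      map_eq_zero_iff _ (algebraMap K (RatFunc K)).injective] at h
    exact ⟨-z, by push_cast; linear_combination -h, a, ha, by rw [neg_neg]⟩
  · rintro ⟨n, rfl, a, -, rfl⟩
    rw [X_mul_derivation_C_mul_zpow hD, map_intCast]
    push_cast
    ring

end RatFunc

open AddMonoidAlgebra RatFunc in
theorem derivations_commute_on_single_iff {K : Type*} [Field K] [CharZero K]
    {M : Type*} [AddCommGroup M]
    {D : Derivation K (RatFunc K) (RatFunc K)} {v ρ : M →+ ℚ} {e θ : M} {s d : ℤ} (hd : d ≠ 0)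
    {φ : RatFunc K}
    {Db Dd : Derivation K (AddMonoidAlgebra (RatFunc K) M) (AddMonoidAlgebra (RatFunc K) M)}
    (hDb : ∀ (Q : RatFunc K) (m : M), Db (single m Q) =
      single (m + e) ((d : RatFunc K) * (((v m : ℚ) : RatFunc K) * Q + X * D Q) * X ^ s))
    (hDd : ∀ (Q : RatFunc K) (m : M), Dd (single m Q) =
      single (m + θ) (((ρ m : ℚ) : RatFunc K) * φ * Q))
    (m : M) (Q : RatFunc K) :
    Dd (Db (single m Q)) = Db (Dd (single m Q)) ↔
      ((ρ e : ℚ) : RatFunc K) * φ * (((v m : ℚ) : RatFunc K) * Q + X * D Q) =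
        ((ρ m : ℚ) : RatFunc K) * Q * (X * D φ + ((v θ : ℚ) : RatFunc K) * φ) := by
  have hdXs : (d : RatFunc K) * X ^ s ≠ 0 :=
    mul_ne_zero (Int.cast_ne_zero.mpr hd) (zpow_ne_zero _ X_ne_zero)
  have hDρ : D (((ρ m : ℚ) : RatFunc K) * φ * Q) =
      ((ρ m : ℚ) : RatFunc K) * (D φ * Q + φ * D Q) := by
    rw [mul_assoc, D.leibniz, D.leibniz, ← map_ratCast (algebraMap K (RatFunc K)),
      D.map_algebraMap, smul_zero, add_zero, smul_eq_mul, smul_eq_mul, smul_eq_mul]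
    ring
  rw [hDb, hDd, hDd, hDb, add_right_comm m θ e, single_right_inj, hDρ, map_add, map_add]
  push_cast
  constructor <;> intro h
  · exact mul_left_cancel₀ hdXs (by linear_combination h)
  · linear_combination (d : RatFunc K) * X ^ s * h

theorem stmt_2_general {K : Type*} [Field K] [CharZero K]
    {M : Type*} [AddCommGroup M]
    (D : Derivation K (RatFunc K) (RatFunc K)) (hD : D RatFunc.X = 1)
    (v ρ : M →+ ℚ) (hρ : ρ ≠ 0) (e θ : M) (s : ℤ) (d : ℤ) (hd : d ≠ 0)
    (φ : RatFunc K) (hφ : φ ≠ 0)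
    (Db Dd : Derivation K (AddMonoidAlgebra (RatFunc K) M) (AddMonoidAlgebra (RatFunc K) M))
    (hDb : ∀ (Q : RatFunc K) (m : M), Db (AddMonoidAlgebra.single m Q) =
      AddMonoidAlgebra.single (m + e)
        ((d : RatFunc K) * (((v m : ℚ) : RatFunc K) * Q + RatFunc.X * D Q) * RatFunc.X ^ s))
    (hDd : ∀ (Q : RatFunc K) (m : M), Dd (AddMonoidAlgebra.single m Q) =
      AddMonoidAlgebra.single (m + θ) (((ρ m : ℚ) : RatFunc K) * φ * Q)) :
    (∀ f, Dd (Db f) = Db (Dd f)) ↔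
      (ρ e = 0 ∧ ∃ n : ℤ, (n : ℚ) = v θ ∧
        ∃ lam : K, lam ≠ 0 ∧ φ = algebraMap K (RatFunc K) lam * RatFunc.X ^ (-n)) := by
  have hcomm : (∀ f, Dd (Db f) = Db (Dd f)) ↔
      ∀ m Q, Dd (Db (AddMonoidAlgebra.single m Q)) = Db (Dd (AddMonoidAlgebra.single m Q)) := by
    refine ⟨fun h m Q => h _, fun h f => ?_⟩
    induction f using AddMonoidAlgebra.induction_linear with
    | zero => simp only [map_zero]
    | add f g hf hg => simp only [map_add, hf, hg]
    | single m Q => exact h m Q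
  have hode := RatFunc.X_mul_derivation_add_eq_zero_iff hD hφ ((v θ : ℚ) : K)
  have hcast : ∀ n : ℤ, (n : K) = (v θ : K) ↔ (n : ℚ) = v θ := fun n => by exact_mod_cast Iff.rfl
  simp only [map_ratCast, hcast] at hode
  simp only [hcomm, derivations_commute_on_single_iff hd hDb hDd, ← hode]
  constructor
  · intro h
    have hρe : ρ e = 0 := by simpa [hD, hφ, RatFunc.X_ne_zero] using h 0 RatFunc.X
    obtain ⟨m, hm⟩ : ∃ m, ρ m ≠ 0 := by
      by_contra! h0
      exact hρ (AddMonoidHom.ext h0)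
    exact ⟨hρe, by simpa [hρe, hm] using (h m 1).symm⟩
  · rintro ⟨hρe, hode⟩ m Q
    simp [hρe, hode]

/-- Lemma on brackets.  Let `v ∈ Hom(M,ℚ)`, `ρ ∈ Hom(M,ℚ)` nonzero,
`e, θ ∈ M`, `s ∈ ℤ`, `d ∈ ℤ∖{0}`, `φ ∈ K(t)∖{0}`.  Define derivations of `K(t)[M]` by
`∂_•(Qχ^m) = d·(v(m)Q + tQ′)·t^s·χ^{m+e}` and `∂(Qχ^m) = ρ(m)·φ·Q·χ^{m+θ}`.
Then `∂∘∂_• = ∂_•∘∂` iff `ρ(e) = 0`, `v(θ) ∈ ℤ`, and `φ = λ·t^{−v(θ)}` for some `λ ∈ K∖{0}`. -/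
theorem stmt_2 {K : Type*} [Field K] [CharZero K]
    {M : Type*} [AddCommGroup M] [Module.Free ℤ M] [Module.Finite ℤ M]
    (D : Derivation K (RatFunc K) (RatFunc K)) (hD : D RatFunc.X = 1)
    (v ρ : M →+ ℚ) (hρ : ρ ≠ 0) (e θ : M) (s : ℤ) (d : ℤ) (hd : d ≠ 0)
    (φ : RatFunc K) (hφ : φ ≠ 0)
    (Db Dd : Derivation K (AddMonoidAlgebra (RatFunc K) M) (AddMonoidAlgebra (RatFunc K) M))
    (hDb : ∀ (Q : RatFunc K) (m : M), Db (AddMonoidAlgebra.single m Q) =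
      AddMonoidAlgebra.single (m + e)
        ((d : RatFunc K) * (((v m : ℚ) : RatFunc K) * Q + RatFunc.X * D Q) * RatFunc.X ^ s))
    (hDd : ∀ (Q : RatFunc K) (m : M), Dd (AddMonoidAlgebra.single m Q) =
      AddMonoidAlgebra.single (m + θ) (((ρ m : ℚ) : RatFunc K) * φ * Q)) :
    (∀ f, Dd (Db f) = Db (Dd f)) ↔
      (ρ e = 0 ∧ ∃ n : ℤ, (n : ℚ) = v θ ∧
        ∃ lam : K, lam ≠ 0 ∧ φ = algebraMap K (RatFunc K) lam * RatFunc.X ^ (-n)) :=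
  stmt_2_general D hD v ρ hρ e θ s d hd φ hφ Db Dd hDb hDd
end

section
/- Let θ ∈ M and define the K-derivation ∂ of K(t)[M] by ∂(Qχ^m) = Q′·χ^{m+θ}. Then ∂ commutes with the reflexive derivation ∂₋ if and only if v₀(θ) = 1, and ∂ commutes with the reflexive derivation ∂₊ if and only if v₁(θ) = 1. -/
/-! Both reflexive derivations have the shape `Qχ^m ↦ (v(m)Q + cQ')χ^{m+s}` with `c' = 1`
(`c = t`, `s = -e` for `∂₋`; `c = t - 1`, `s = e` for `∂₊`). Against `∂ = Qχ^m ↦ Q'χ^{m+θ}`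
the second-order terms `cQ''` cancel and the commutator is `Qχ^m ↦ (1 - v(θ))Q'χ^{m+s+θ}`,
which vanishes identically iff `v(θ) = 1` (test it on `Q = c`). -/

namespace AddMonoidAlgebra

variable {K A M : Type*} [CommRing K] [CommRing A] [Algebra K A] [AddCommMonoid M]
  {D : Derivation K A A} {v : M →+ ℤ} {s θ : M} {c : A}
  {Dr Dθ : Derivation K A[M] A[M]}

theorem commutator_single (hc : D c = 1)
    (hDr : ∀ (Q : A) (m : M), Dr (single m Q) = single (m + s) ((v m : A) * Q + c * D Q))
    (hDθ : ∀ (Q : A) (m : M), Dθ (single m Q) = single (m + θ) (D Q)) (Q : A) (m : M) :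
    Dθ (Dr (single m Q)) - Dr (Dθ (single m Q)) =
      single (m + s + θ) ((1 - (v θ : A)) * D Q) := by
  have hD : D ((v m : A) * Q + c * D Q) = (v m : A) * D Q + D Q + c * D (D Q) := by
    rw [map_add, Derivation.leibniz, Derivation.leibniz, Derivation.map_intCast, hc]
    simp only [smul_eq_mul]
    ring
  rw [hDr, hDθ, hDθ, hDr, hD, add_right_comm m θ s, ← single_sub]
  congr 1
  push_cast [map_add]
  ring

theorem commutes_iff_apply_eq_one [CharZero A] (hc : D c = 1)
    (hDr : ∀ (Q : A) (m : M), Dr (single m Q) = single (m + s) ((v m : A) * Q + c * D Q))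
    (hDθ : ∀ (Q : A) (m : M), Dθ (single m Q) = single (m + θ) (D Q)) :
    (∀ f, Dθ (Dr f) = Dr (Dθ f)) ↔ v θ = 1 := by
  constructor
  · intro h
    have hc0 := commutator_single hc hDr hDθ c 0
    rw [sub_eq_zero.mpr (h _), hc, mul_one, eq_comm, single_eq_zero, sub_eq_zero] at hc0
    exact_mod_cast hc0.symm
  · intro hv f
    induction f using induction_linear with
    | zero => simp
    | add f g hf hg => simp only [map_add, hf, hg]
    | single m Q =>
      have h := commutator_single hc hDr hDθ Q m
      rwa [hv, Int.cast_one, sub_self, zero_mul, single_zero, sub_eq_zero] at h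

end AddMonoidAlgebra

theorem stmt_3_general {K : Type*} [Field K] [CharZero K]
    {M : Type*} [AddCommGroup M]
    (D : Derivation K (RatFunc K) (RatFunc K)) (hD : D RatFunc.X = 1)
    (v₀ v₁ : M →+ ℤ) (e : M)
    (Dm Dp : Derivation K (AddMonoidAlgebra (RatFunc K) M) (AddMonoidAlgebra (RatFunc K) M))
    (hDm : ∀ (Q : RatFunc K) (m : M), Dm (AddMonoidAlgebra.single m Q) =
      AddMonoidAlgebra.single (m - e) ((v₀ m : RatFunc K) * Q + RatFunc.X * D Q))
    (hDp : ∀ (Q : RatFunc K) (m : M), Dp (AddMonoidAlgebra.single m Q) =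
      AddMonoidAlgebra.single (m + e) ((v₁ m : RatFunc K) * Q + (RatFunc.X - 1) * D Q))
    (θ : M)
    (Dd : Derivation K (AddMonoidAlgebra (RatFunc K) M) (AddMonoidAlgebra (RatFunc K) M))
    (hDd : ∀ (Q : RatFunc K) (m : M), Dd (AddMonoidAlgebra.single m Q) =
      AddMonoidAlgebra.single (m + θ) (D Q)) :
    ((∀ f, Dd (Dm f) = Dm (Dd f)) ↔ v₀ θ = 1) ∧
    ((∀ f, Dd (Dp f) = Dp (Dd f)) ↔ v₁ θ = 1) := by
  have hDm' : ∀ (Q : RatFunc K) (m : M), Dm (AddMonoidAlgebra.single m Q) =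
      AddMonoidAlgebra.single (m + -e) ((v₀ m : RatFunc K) * Q + RatFunc.X * D Q) := by
    simpa only [← sub_eq_add_neg] using hDm
  have hDX : D (RatFunc.X - 1) = 1 := by rw [map_sub, hD, Derivation.map_one_eq_zero, sub_zero]
  exact ⟨AddMonoidAlgebra.commutes_iff_apply_eq_one hD hDm' hDd,
    AddMonoidAlgebra.commutes_iff_apply_eq_one hDX hDp hDd⟩

/-- Let `K` be a field of characteristic zero, `K(t)` the field of rational
functions (with `D` the derivative `d/dt`, i.e. the `K`-derivation with `D t = 1`), `M` a
finitely generated free abelian group and `K(t)[M]` its group algebra over `K(t)`.  Given group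
homomorphisms `v₀ v₁ : M → ℤ` and `e ∈ M` with `v₀ e = 1`, `v₁ e = -1`, let `∂₋, ∂₊` be the
reflexive derivations, `∂₋(Qχ^m) = (v₀(m)Q + tQ')χ^{m-e}`, `∂₊(Qχ^m) = (v₁(m)Q + (t-1)Q')χ^{m+e}`.
For `θ ∈ M` let `∂` be the derivation with `∂(Qχ^m) = Q'·χ^{m+θ}`.  Then `∂` commutes with `∂₋`
iff `v₀ θ = 1`, and `∂` commutes with `∂₊` iff `v₁ θ = 1`. -/
theorem stmt_3 {K : Type*} [Field K] [CharZero K]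
    {M : Type*} [AddCommGroup M] [Module.Free ℤ M] [Module.Finite ℤ M]
    (D : Derivation K (RatFunc K) (RatFunc K)) (hD : D RatFunc.X = 1)
    (v₀ v₁ : M →+ ℤ) (e : M) (hv₀e : v₀ e = 1) (hv₁e : v₁ e = -1)
    (Dm Dp : Derivation K (AddMonoidAlgebra (RatFunc K) M) (AddMonoidAlgebra (RatFunc K) M))
    (hDm : ∀ (Q : RatFunc K) (m : M), Dm (AddMonoidAlgebra.single m Q) =
      AddMonoidAlgebra.single (m - e) ((v₀ m : RatFunc K) * Q + RatFunc.X * D Q))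
    (hDp : ∀ (Q : RatFunc K) (m : M), Dp (AddMonoidAlgebra.single m Q) =
      AddMonoidAlgebra.single (m + e) ((v₁ m : RatFunc K) * Q + (RatFunc.X - 1) * D Q))
    (θ : M)
    (Dd : Derivation K (AddMonoidAlgebra (RatFunc K) M) (AddMonoidAlgebra (RatFunc K) M))
    (hDd : ∀ (Q : RatFunc K) (m : M), Dd (AddMonoidAlgebra.single m Q) =
      AddMonoidAlgebra.single (m + θ) (D Q)) :
    ((∀ f, Dd (Dm f) = Dm (Dd f)) ↔ v₀ θ = 1) ∧
    ((∀ f, Dd (Dp f) = Dp (Dd f)) ↔ v₁ θ = 1) :=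
  stmt_3_general D hD v₀ v₁ e Dm Dp hDm hDp θ Dd hDd
end

section
/- Let θ ∈ M, set γ = t^{−v₀(θ)}·(t−1)^{−v₁(θ)} ∈ K(t), and define the K-derivation ∂ of K(t)[M] by ∂(Qχ^m) = ((v₀(m)/t + v₁(m)/(t−1))·Q + Q′)·γ·χ^{m+θ}. Then ∂ commutes with both reflexive derivations ∂₋ and ∂₊ if and only if v₀(θ) = v₁(θ) = −1; in that case ∂(Qχ^m) = ((v₀(m)(t−1) + v₁(m)t)·Q + t(t−1)·Q′)·χ^{m+θ} for all Q ∈ K(t) and m ∈ M. -/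
/-!
Write `L_m Q = (v₀(m)/t + v₁(m)/(t-1))·Q + Q'`, so that `∂(Qχ^m) = L_m(Q)·γ·χ^{m+θ}`. Using
`γ'/γ = -(v₀(θ)/t + v₁(θ)/(t-1))`, a direct computation gives
`(∂∂₋ - ∂₋∂)(Qχ^m) = (1 + v₁(θ))·t/(t-1)·L_m(Q)·γ·χ^{m+θ-e}`,
and `L_0(t) = 1`, so `∂` commutes with `∂₋` iff `v₁(θ) = -1`. Exchanging `(t, v₀, e)` with
`(t-1, v₁, -e)` turns `∂₋` into `∂₊` and leaves `∂` unchanged, so `∂` commutes with `∂₊` iff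
`v₀(θ) = -1`.
-/

open AddMonoidAlgebra

namespace Derivation

variable {R F : Type*} [CommRing R] [Field F] [Algebra R F] (D : Derivation R F F) {u w : F}

theorem ne_zero_of_apply_eq_one (hu : D u = 1) : u ≠ 0 := by
  rintro rfl
  simp at hu

theorem apply_zpow_mul_zpow (hu : D u = 1) (hw : D w = 1) (a b : ℤ) :
    D (u ^ a * w ^ b) = (a / u + b / w) * (u ^ a * w ^ b) := by
  have hu₀ := D.ne_zero_of_apply_eq_one hu
  have hw₀ := D.ne_zero_of_apply_eq_one hw
  rw [leibniz, leibniz_zpow, leibniz_zpow, hu, hw, zpow_sub_one₀ hu₀, zpow_sub_one₀ hw₀]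
  simp only [smul_eq_mul, zsmul_eq_mul]
  field_simp
  ring

section Commutator

variable {M : Type*} [AddCommGroup M] (hu : D u = 1) (hw : D w = 1) (α β : M →+ ℤ)
  {e θ : M} {γ : F} {Dm Dd : Derivation R F[M] F[M]}
  (hαe : α e = 1) (hβe : β e = -1) (hγ : γ = u ^ (-α θ) * w ^ (-β θ))
  (hDm : ∀ (Q : F) (m : M), Dm (single m Q) = single (m - e) ((α m : F) * Q + u * D Q))
  (hDd : ∀ (Q : F) (m : M), Dd (single m Q) =
    single (m + θ) ((((α m : F) / u + (β m : F) / w) * Q + D Q) * γ))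
include hu hw hαe hβe hγ hDm hDd

theorem commutator_apply_single (Q : F) (m : M) :
    Dd (Dm (single m Q)) - Dm (Dd (single m Q)) = single (m + θ - e)
      ((1 + β θ) * (u / w) * ((((α m : F) / u + (β m : F) / w) * Q + D Q) * γ)) := by
  have hu₀ := D.ne_zero_of_apply_eq_one hu
  have hw₀ := D.ne_zero_of_apply_eq_one hw
  have hDγ : D γ = -((α θ : F) / u + (β θ : F) / w) * γ := by
    rw [hγ, D.apply_zpow_mul_zpow hu hw]
    push_cast
    ring
  rw [hDm, hDd, hDd, hDm, sub_add_eq_add_sub, ← single_sub]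
  congr 1
  simp only [map_add, map_sub, leibniz, leibniz_div, hDγ, hu, hw, hαe, hβe, map_intCast,
    smul_eq_mul]
  push_cast
  field_simp
  ring

theorem commute_iff_eq_neg_one [CharZero F] : (∀ f, Dd (Dm f) = Dm (Dd f)) ↔ β θ = -1 := by
  have hcomm := commutator_apply_single D hu hw α β hαe hβe hγ hDm hDd
  have hu₀ := D.ne_zero_of_apply_eq_one hu
  have hw₀ := D.ne_zero_of_apply_eq_one hw
  constructor
  · intro h
    have hzero := hcomm u 0
    rw [h, sub_self, eq_comm, single_eq_zero] at hzero
    have hγ₀ : γ ≠ 0 := hγ ▸ mul_ne_zero (zpow_ne_zero _ hu₀) (zpow_ne_zero _ hw₀)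
    have hcast : ((β θ + 1 : ℤ) : F) = 0 := by
      simpa [hu, add_comm, hu₀, hw₀, hγ₀] using hzero
    exact eq_neg_of_add_eq_zero_left (Int.cast_eq_zero.mp hcast)
  · intro h f
    induction f using AddMonoidAlgebra.induction_linear with
    | zero => simp
    | add f g hf hg => simp only [map_add, hf, hg]
    | single m Q => exact sub_eq_zero.mp (by simpa [h] using hcomm Q m)

end Commutator

end Derivation

theorem stmt_4_general {K : Type*} [Field K] [CharZero K]
    {M : Type*} [AddCommGroup M]
    (D : Derivation K (RatFunc K) (RatFunc K)) (hD : D RatFunc.X = 1)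
    (v₀ v₁ : M →+ ℤ) (e : M) (hv₀e : v₀ e = 1) (hv₁e : v₁ e = -1)
    (Dm Dp : Derivation K (AddMonoidAlgebra (RatFunc K) M) (AddMonoidAlgebra (RatFunc K) M))
    (hDm : ∀ (Q : RatFunc K) (m : M), Dm (AddMonoidAlgebra.single m Q) =
      AddMonoidAlgebra.single (m - e) ((v₀ m : RatFunc K) * Q + RatFunc.X * D Q))
    (hDp : ∀ (Q : RatFunc K) (m : M), Dp (AddMonoidAlgebra.single m Q) =
      AddMonoidAlgebra.single (m + e) ((v₁ m : RatFunc K) * Q + (RatFunc.X - 1) * D Q))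
    (θ : M) (γ : RatFunc K)
    (hγ : γ = RatFunc.X ^ (-(v₀ θ)) * (RatFunc.X - 1) ^ (-(v₁ θ)))
    (Dd : Derivation K (AddMonoidAlgebra (RatFunc K) M) (AddMonoidAlgebra (RatFunc K) M))
    (hDd : ∀ (Q : RatFunc K) (m : M), Dd (AddMonoidAlgebra.single m Q) =
      AddMonoidAlgebra.single (m + θ)
        ((((v₀ m : RatFunc K) / RatFunc.X + (v₁ m : RatFunc K) / (RatFunc.X - 1)) * Q + D Q) * γ)) :
    (((∀ f, Dd (Dm f) = Dm (Dd f)) ∧ (∀ f, Dd (Dp f) = Dp (Dd f))) ↔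
        (v₀ θ = -1 ∧ v₁ θ = -1)) ∧
    ((v₀ θ = -1 ∧ v₁ θ = -1) → ∀ (Q : RatFunc K) (m : M),
      Dd (AddMonoidAlgebra.single m Q) = AddMonoidAlgebra.single (m + θ)
        (((v₀ m : RatFunc K) * (RatFunc.X - 1) + (v₁ m : RatFunc K) * RatFunc.X) * Q +
          RatFunc.X * (RatFunc.X - 1) * D Q)) := by
  have hD₁ : D (RatFunc.X - 1) = 1 := by rw [map_sub, hD, D.map_one_eq_zero, sub_zero]
  have hm := D.commute_iff_eq_neg_one hD hD₁ v₀ v₁ hv₀e hv₁e hγ hDm hDd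
  have hp := D.commute_iff_eq_neg_one hD₁ hD v₁ v₀ (e := -e) (θ := θ) (γ := γ)
    (by simp [hv₁e]) (by simp [hv₀e]) (by rw [hγ, mul_comm])
    (fun Q m => by rw [hDp, sub_neg_eq_add])
    (fun Q m => by rw [hDd, add_comm ((v₀ m : RatFunc K) / RatFunc.X)])
  refine ⟨by rw [hm, hp, and_comm], ?_⟩
  rintro ⟨h₀, h₁⟩ Q m
  have hX := D.ne_zero_of_apply_eq_one hD
  have hX₁ := D.ne_zero_of_apply_eq_one hD₁
  rw [hDd, hγ, h₀, h₁, neg_neg, zpow_one, zpow_one]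
  congr 1
  field_simp

/-- Reflexive setting as before.  For `θ ∈ M` let
`γ = t^{-v₀(θ)}·(t-1)^{-v₁(θ)}` and let `∂` be the derivation given by
`∂(Qχ^m) = ((v₀(m)/t + v₁(m)/(t-1))·Q + Q')·γ·χ^{m+θ}`.  Then `∂` commutes with both reflexive
derivations `∂₋` and `∂₊` iff `v₀(θ) = v₁(θ) = -1`; and in that case
`∂(Qχ^m) = ((v₀(m)(t-1) + v₁(m)t)·Q + t(t-1)·Q')·χ^{m+θ}`. -/
theorem stmt_4 {K : Type*} [Field K] [CharZero K]
    {M : Type*} [AddCommGroup M] [Module.Free ℤ M] [Module.Finite ℤ M]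
    (D : Derivation K (RatFunc K) (RatFunc K)) (hD : D RatFunc.X = 1)
    (v₀ v₁ : M →+ ℤ) (e : M) (hv₀e : v₀ e = 1) (hv₁e : v₁ e = -1)
    (Dm Dp : Derivation K (AddMonoidAlgebra (RatFunc K) M) (AddMonoidAlgebra (RatFunc K) M))
    (hDm : ∀ (Q : RatFunc K) (m : M), Dm (AddMonoidAlgebra.single m Q) =
      AddMonoidAlgebra.single (m - e) ((v₀ m : RatFunc K) * Q + RatFunc.X * D Q))
    (hDp : ∀ (Q : RatFunc K) (m : M), Dp (AddMonoidAlgebra.single m Q) =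
      AddMonoidAlgebra.single (m + e) ((v₁ m : RatFunc K) * Q + (RatFunc.X - 1) * D Q))
    (θ : M) (γ : RatFunc K)
    (hγ : γ = RatFunc.X ^ (-(v₀ θ)) * (RatFunc.X - 1) ^ (-(v₁ θ)))
    (Dd : Derivation K (AddMonoidAlgebra (RatFunc K) M) (AddMonoidAlgebra (RatFunc K) M))
    (hDd : ∀ (Q : RatFunc K) (m : M), Dd (AddMonoidAlgebra.single m Q) =
      AddMonoidAlgebra.single (m + θ)
        ((((v₀ m : RatFunc K) / RatFunc.X + (v₁ m : RatFunc K) / (RatFunc.X - 1)) * Q + D Q) * γ)) :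
    (((∀ f, Dd (Dm f) = Dm (Dd f)) ∧ (∀ f, Dd (Dp f) = Dp (Dd f))) ↔
        (v₀ θ = -1 ∧ v₁ θ = -1)) ∧
    ((v₀ θ = -1 ∧ v₁ θ = -1) → ∀ (Q : RatFunc K) (m : M),
      Dd (AddMonoidAlgebra.single m Q) = AddMonoidAlgebra.single (m + θ)
        (((v₀ m : RatFunc K) * (RatFunc.X - 1) + (v₁ m : RatFunc K) * RatFunc.X) * Q +
          RatFunc.X * (RatFunc.X - 1) * D Q)) :=
  stmt_4_general D hD v₀ v₁ e hv₀e hv₁e Dm Dp hDm hDp θ γ hγ Dd hDd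
end

section
/- Let ρ ∈ Hom(M,ℚ) be nonzero with ρ(e) = 0, let θ ∈ M with v₀(θ) ∈ ℤ, and define the K-derivation ∂ of K(t)[M] by ∂(Qχ^m) = ρ(m)·t^{−v₀(θ)}·Q·χ^{m+θ}. Then ∂ commutes with the reflexive derivation ∂₋, and (∂₊∘∂ − ∂∘∂₊)(Qχ^m) = ρ(m)·(v₁(θ) − v₀(θ)·(t−1)/t)·t^{−v₀(θ)}·Q·χ^{m+e+θ} for all Q ∈ K(t) and m ∈ M; consequently ∂ commutes with the reflexive derivation ∂₊ if and only if v₀(θ) = v₁(θ) = 0. -/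
/-!
On a monomial `Qχ^m` every composite of these derivations is again a monomial, and the only
derivative to compute is `D(t^{-n}) = -n t^{-n} / t`. Because `ρ(e) = 0`, the factor `ρ(m)` is
unchanged by the shifts `m ↦ m ± e`, which gives the commutation with `∂₋` and the formula for the
commutator with `∂₊`. That commutator vanishes iff `v₁(θ) t - v₀(θ) (t - 1) = 0` in `K[t]`, i.e.
iff `v₀(θ) = v₁(θ) = 0`; and two additive maps commute iff they commute on monomials.
-/

open AddMonoidAlgebra

theorem AddMonoidAlgebra.comm_iff_comm_single {S M F G : Type*} [Semiring S] [AddMonoid M]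
    [FunLike F S[M] S[M]] [AddMonoidHomClass F S[M] S[M]]
    [FunLike G S[M] S[M]] [AddMonoidHomClass G S[M] S[M]] (f : F) (g : G) :
    (∀ x, f (g x) = g (f x)) ↔ ∀ m a, f (g (single m a)) = g (f (single m a)) := by
  refine ⟨fun h _ _ ↦ h _, fun h x ↦ ?_⟩
  induction x using induction_linear with
  | zero => simp only [map_zero]
  | add x y hx hy => simp only [map_add, hx, hy]
  | single m a => exact h m a

namespace RatFunc

variable {K : Type*} [Field K]

theorem derivation_ratCast (D : Derivation K (RatFunc K) (RatFunc K)) (q : ℚ) :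
    D (q : RatFunc K) = 0 := by
  rw [← map_ratCast (algebraMap K (RatFunc K)), D.map_algebraMap]

theorem derivation_X_zpow {D : Derivation K (RatFunc K) (RatFunc K)} (hD : D X = 1) (k : ℤ) :
    D (X ^ k) = (k : RatFunc K) * X ^ k / X := by
  rw [D.leibniz_zpow, hD, smul_eq_mul, mul_one, zsmul_eq_mul, zpow_sub_one₀ X_ne_zero,
    mul_div_assoc, div_eq_mul_inv]

theorem intCast_sub_intCast_mul_X_sub_one_div_X_eq_zero_iff [CharZero K] (a b : ℤ) :
    (a : RatFunc K) - (b : RatFunc K) * (X - 1) / X = 0 ↔ a = 0 ∧ b = 0 := by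
  constructor
  · intro h
    have hpoly : (Polynomial.C ((a - b : ℤ) : K) * Polynomial.X + Polynomial.C (b : K)) = 0 := by
      apply RatFunc.algebraMap_injective K
      have : algebraMap _ (RatFunc K)
          (Polynomial.C ((a - b : ℤ) : K) * Polynomial.X + Polynomial.C (b : K)) =
            X * ((a : RatFunc K) - (b : RatFunc K) * (X - 1) / X) := by
        have hX : (X : RatFunc K) ≠ 0 := X_ne_zero
        field_simp
        simp only [Int.cast_sub, map_sub, map_intCast, map_add, map_mul, algebraMap_X]
        ring
      rw [this, h, mul_zero, map_zero]
    obtain rfl : b = 0 := by simpa using congrArg (Polynomial.coeff · 0) hpoly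
    simpa using hpoly
  · rintro ⟨rfl, rfl⟩
    simp

end RatFunc

open RatFunc

section Reflexive

variable {K M : Type*} [Field K] [AddCommGroup M] {D : Derivation K (RatFunc K) (RatFunc K)}
  {v₀ v₁ : M →+ ℤ} {ρ : M →+ ℚ} {e θ : M}
  {Dm Dp Dd : Derivation K (RatFunc K)[M] (RatFunc K)[M]}

theorem reflexiveMinus_comm_single (hD : D X = 1)
    (hDm : ∀ (Q : RatFunc K) (m : M),
      Dm (single m Q) = single (m - e) ((v₀ m : RatFunc K) * Q + X * D Q))
    (hρe : ρ e = 0)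
    (hDd : ∀ (Q : RatFunc K) (m : M),
      Dd (single m Q) = single (m + θ) (((ρ m : ℚ) : RatFunc K) * X ^ (-(v₀ θ)) * Q))
    (Q : RatFunc K) (m : M) :
    Dd (Dm (single m Q)) = Dm (Dd (single m Q)) := by
  rw [hDm, hDd, hDd, hDm, show m - e + θ = m + θ - e by abel]
  congr 1
  simp only [Derivation.leibniz, derivation_X_zpow hD, derivation_ratCast, smul_eq_mul, map_sub,
    map_add, hρe, sub_zero, Int.cast_add, Int.cast_neg]
  have hX : (X : RatFunc K) ≠ 0 := X_ne_zero
  field_simp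
  ring

theorem reflexivePlus_commutator_single (hD : D X = 1)
    (hDp : ∀ (Q : RatFunc K) (m : M),
      Dp (single m Q) = single (m + e) ((v₁ m : RatFunc K) * Q + (X - 1) * D Q))
    (hρe : ρ e = 0)
    (hDd : ∀ (Q : RatFunc K) (m : M),
      Dd (single m Q) = single (m + θ) (((ρ m : ℚ) : RatFunc K) * X ^ (-(v₀ θ)) * Q))
    (Q : RatFunc K) (m : M) :
    Dp (Dd (single m Q)) - Dd (Dp (single m Q)) =
      single (m + e + θ) (((ρ m : ℚ) : RatFunc K) *
        ((v₁ θ : RatFunc K) - (v₀ θ : RatFunc K) * (X - 1) / X) * X ^ (-(v₀ θ)) * Q) := by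
  rw [hDp, hDd, hDd, hDp, show m + θ + e = m + e + θ by abel, ← single_sub]
  congr 1
  simp only [Derivation.leibniz, derivation_X_zpow hD, derivation_ratCast, smul_eq_mul, map_add,
    hρe, add_zero, Int.cast_add, Int.cast_neg]
  have hX : (X : RatFunc K) ≠ 0 := X_ne_zero
  field_simp
  ring

end Reflexive

theorem stmt_5_general {K : Type*} [Field K] [CharZero K]
    {M : Type*} [AddCommGroup M]
    (D : Derivation K (RatFunc K) (RatFunc K)) (hD : D RatFunc.X = 1)
    (v₀ v₁ : M →+ ℤ) (e : M)
    (Dm Dp : Derivation K (AddMonoidAlgebra (RatFunc K) M) (AddMonoidAlgebra (RatFunc K) M))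
    (hDm : ∀ (Q : RatFunc K) (m : M), Dm (AddMonoidAlgebra.single m Q) =
      AddMonoidAlgebra.single (m - e) ((v₀ m : RatFunc K) * Q + RatFunc.X * D Q))
    (hDp : ∀ (Q : RatFunc K) (m : M), Dp (AddMonoidAlgebra.single m Q) =
      AddMonoidAlgebra.single (m + e) ((v₁ m : RatFunc K) * Q + (RatFunc.X - 1) * D Q))
    (ρ : M →+ ℚ) (hρ : ρ ≠ 0) (hρe : ρ e = 0) (θ : M)
    (Dd : Derivation K (AddMonoidAlgebra (RatFunc K) M) (AddMonoidAlgebra (RatFunc K) M))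
    (hDd : ∀ (Q : RatFunc K) (m : M), Dd (AddMonoidAlgebra.single m Q) =
      AddMonoidAlgebra.single (m + θ) (((ρ m : ℚ) : RatFunc K) * RatFunc.X ^ (-(v₀ θ)) * Q)) :
    (∀ f, Dd (Dm f) = Dm (Dd f)) ∧
    (∀ (Q : RatFunc K) (m : M),
      Dp (Dd (AddMonoidAlgebra.single m Q)) - Dd (Dp (AddMonoidAlgebra.single m Q)) =
        AddMonoidAlgebra.single (m + e + θ)
          (((ρ m : ℚ) : RatFunc K) *
            ((v₁ θ : RatFunc K) - (v₀ θ : RatFunc K) * (RatFunc.X - 1) / RatFunc.X) *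
            RatFunc.X ^ (-(v₀ θ)) * Q)) ∧
    ((∀ f, Dd (Dp f) = Dp (Dd f)) ↔ (v₀ θ = 0 ∧ v₁ θ = 0)) := by
  have commutator := reflexivePlus_commutator_single hD hDp hρe hDd
  refine ⟨(comm_iff_comm_single Dd Dm).2 fun m Q ↦ reflexiveMinus_comm_single hD hDm hρe hDd Q m,
    commutator, ?_⟩
  rw [comm_iff_comm_single Dd Dp, and_comm,
    ← intCast_sub_intCast_mul_X_sub_one_div_X_eq_zero_iff (K := K) (v₁ θ) (v₀ θ)]
  constructor
  · intro h
    obtain ⟨m, hm⟩ : ∃ m, ρ m ≠ 0 := DFunLike.ne_iff.mp hρ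
    have hcoeff := commutator 1 m
    rw [h, sub_self, eq_comm, single_eq_zero] at hcoeff
    simpa [hm, zpow_ne_zero, X_ne_zero] using hcoeff
  · intro h Q m
    rw [eq_comm, ← sub_eq_zero, commutator, h]
    simp

/-- Reflexive setting.  Let `ρ : M → ℚ` be a nonzero homomorphism with
`ρ(e) = 0`, `θ ∈ M` (note `v₀(θ) ∈ ℤ` automatically), and `∂(Qχ^m) = ρ(m)·t^{-v₀(θ)}·Q·χ^{m+θ}`.
Then `∂` commutes with `∂₋`, the commutator with `∂₊` is
`(∂₊∘∂ − ∂∘∂₊)(Qχ^m) = ρ(m)·(v₁(θ) − v₀(θ)·(t−1)/t)·t^{−v₀(θ)}·Q·χ^{m+e+θ}`, and consequently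
`∂` commutes with `∂₊` iff `v₀(θ) = v₁(θ) = 0`. -/
theorem stmt_5 {K : Type*} [Field K] [CharZero K]
    {M : Type*} [AddCommGroup M] [Module.Free ℤ M] [Module.Finite ℤ M]
    (D : Derivation K (RatFunc K) (RatFunc K)) (hD : D RatFunc.X = 1)
    (v₀ v₁ : M →+ ℤ) (e : M) (hv₀e : v₀ e = 1) (hv₁e : v₁ e = -1)
    (Dm Dp : Derivation K (AddMonoidAlgebra (RatFunc K) M) (AddMonoidAlgebra (RatFunc K) M))
    (hDm : ∀ (Q : RatFunc K) (m : M), Dm (AddMonoidAlgebra.single m Q) =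
      AddMonoidAlgebra.single (m - e) ((v₀ m : RatFunc K) * Q + RatFunc.X * D Q))
    (hDp : ∀ (Q : RatFunc K) (m : M), Dp (AddMonoidAlgebra.single m Q) =
      AddMonoidAlgebra.single (m + e) ((v₁ m : RatFunc K) * Q + (RatFunc.X - 1) * D Q))
    (ρ : M →+ ℚ) (hρ : ρ ≠ 0) (hρe : ρ e = 0) (θ : M)
    (Dd : Derivation K (AddMonoidAlgebra (RatFunc K) M) (AddMonoidAlgebra (RatFunc K) M))
    (hDd : ∀ (Q : RatFunc K) (m : M), Dd (AddMonoidAlgebra.single m Q) =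
      AddMonoidAlgebra.single (m + θ) (((ρ m : ℚ) : RatFunc K) * RatFunc.X ^ (-(v₀ θ)) * Q)) :
    (∀ f, Dd (Dm f) = Dm (Dd f)) ∧
    (∀ (Q : RatFunc K) (m : M),
      Dp (Dd (AddMonoidAlgebra.single m Q)) - Dd (Dp (AddMonoidAlgebra.single m Q)) =
        AddMonoidAlgebra.single (m + e + θ)
          (((ρ m : ℚ) : RatFunc K) *
            ((v₁ θ : RatFunc K) - (v₀ θ : RatFunc K) * (RatFunc.X - 1) / RatFunc.X) *
            RatFunc.X ^ (-(v₀ θ)) * Q)) ∧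
    ((∀ f, Dd (Dp f) = Dp (Dd f)) ↔ (v₀ θ = 0 ∧ v₁ θ = 0)) :=
  stmt_5_general D hD v₀ v₁ e Dm Dp hDm hDp ρ hρ hρe θ Dd hDd
end

section
/- Let ρ ∈ Hom(M,ℚ) be nonzero with ρ(e) = 0, let θ ∈ M with v₀(θ) ∈ ℤ, and define the K-derivation ∂ of K(t)[M] by ∂(Qχ^m) = ρ(m)·t^{−v₀(θ)}·Q·χ^{m+θ}. Then ∂ commutes with the skew derivation ∂₋, and (∂₊∘∂ − ∂∘∂₊)(Qχ^m) = 2ρ(m)·v₁(θ)·t^{−v₀(θ)}·Q·χ^{m+e+θ} for all Q ∈ K(t) and m ∈ M; consequently ∂ commutes with the skew derivation ∂₊ if and only if v₁(θ) = 0. -/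
/-!
Write `∂ = u · E_ρ`, where `u = t^{-n} χ^θ` and `E_ρ(Qχ^m) = ρ(m) Q χ^m` is the Euler derivation
of `ρ`. Since each skew derivation `δ` shifts degrees by `±e` and `ρ(e) = 0`, `δ` commutes with
`E_ρ`, so `[δ, ∂] = δ(u) · E_ρ`. Because `t · d/dt (t^{-n}) = -n t^{-n}` and `v₀(θ) = n`, one
finds `∂₋(u) = 0` and `∂₊(u) = 2 v₁(θ) t^{-n} χ^{θ+e}`.
-/

open AddMonoidAlgebra

theorem AddMonoidAlgebra.comm_of_comm_single {R G A : Type*} [Semiring R] [AddMonoid G]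
    [FunLike A R[G] R[G]] [AddMonoidHomClass A R[G] R[G]] {φ ψ : A}
    (h : ∀ (r : R) (g : G), φ (ψ (single g r)) = ψ (φ (single g r))) (f : R[G]) :
    φ (ψ f) = ψ (φ f) := by
  induction f using AddMonoidAlgebra.induction_linear with
  | zero => simp only [map_zero]
  | add f f' hf hf' => simp only [map_add, hf, hf']
  | single g r => exact h r g

namespace Derivation

variable {K F : Type*} [Field K] [Field F] [Algebra K F] (D : Derivation K F F)

theorem map_ratCast (q : ℚ) : D (q : F) = 0 := by
  rw [← _root_.map_ratCast (algebraMap K F) q, map_algebraMap]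

theorem mul_map_zpow_of_map_eq_one {x : F} (hx : x ≠ 0) (hD : D x = 1) (k : ℤ) :
    x * D (x ^ k) = k * x ^ k := by
  rw [leibniz_zpow, hD, smul_eq_mul, mul_one, zsmul_eq_mul, mul_left_comm,
    ← zpow_one_add₀ hx, add_sub_cancel]

end Derivation

/-- Here `T = u χ^θ · E_ρ`, and `a θ * u + b * D u` is the coefficient of `S(u χ^θ)`. -/
theorem AddMonoidAlgebra.commutator_single_of_euler {K F M : Type*} [Field K] [Field F]
    [Algebra K F] [AddCommGroup M] (D : Derivation K F F)
    {S T : F[M] → F[M]} {s θ : M} {a : M →+ F} {b u : F} {ρ : M →+ ℚ} (hρs : ρ s = 0)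
    (hS : ∀ (Q : F) (m : M), S (single m Q) = single (m + s) (a m * Q + b * D Q))
    (hT : ∀ (Q : F) (m : M), T (single m Q) = single (m + θ) ((ρ m : F) * u * Q))
    (Q : F) (m : M) :
    S (T (single m Q)) - T (S (single m Q)) =
      single (m + s + θ) ((ρ m : F) * (a θ * u + b * D u) * Q) := by
  rw [hT, hS, hS, hT, add_right_comm, ← single_sub, map_add, map_add, hρs, add_zero,
    D.leibniz, D.leibniz, D.map_ratCast]
  congr 1
  simp only [smul_eq_mul]
  ring

section Skew

variable {K M : Type*} [Field K] [CharZero K] [AddCommGroup M]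

theorem skewMinus_commutator_single (D : Derivation K (RatFunc K) (RatFunc K))
    (hD : D RatFunc.X = 1) (v₀ : M →+ ℚ) (e : M) (Dm Dd : (RatFunc K)[M] → (RatFunc K)[M])
    (hDm : ∀ (Q : RatFunc K) (m : M), Dm (single m Q) =
      single (m - e) (2 * (((v₀ m : ℚ) : RatFunc K) * Q + RatFunc.X * D Q)))
    (ρ : M →+ ℚ) (hρe : ρ e = 0) (θ : M) (n : ℤ) (hn : (n : ℚ) = v₀ θ)
    (hDd : ∀ (Q : RatFunc K) (m : M), Dd (single m Q) =
      single (m + θ) (((ρ m : ℚ) : RatFunc K) * RatFunc.X ^ (-n) * Q))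
    (Q : RatFunc K) (m : M) :
    Dm (Dd (single m Q)) = Dd (Dm (single m Q)) := by
  set X : RatFunc K := RatFunc.X
  have hX : X ≠ 0 := RatFunc.X_ne_zero
  let a : M →+ RatFunc K := AddMonoidHom.mk' (fun m ↦ 2 * ((v₀ m : ℚ) : RatFunc K))
    fun m m' ↦ by rw [map_add]; push_cast; ring
  have hDm' (Q : RatFunc K) (m : M) :
      Dm (single m Q) = single (m + -e) (a m * Q + 2 * X * D Q) := by
    rw [hDm, sub_eq_add_neg]
    congr 1
    simp only [a, AddMonoidHom.mk'_apply]
    ring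
  have hu : a θ * X ^ (-n) + 2 * X * D (X ^ (-n)) = 0 := by
    have hEuler : X * D (X ^ (-n)) = -n * X ^ (-n) := by
      rw [D.mul_map_zpow_of_map_eq_one hX hD, Int.cast_neg]
    simp only [a, AddMonoidHom.mk'_apply, ← hn, Rat.cast_intCast]
    linear_combination 2 * hEuler
  rw [← sub_eq_zero, commutator_single_of_euler D (by rw [map_neg, hρe, neg_zero]) hDm' hDd,
    hu, mul_zero, zero_mul, single_zero]

theorem skewPlus_commutator_single (D : Derivation K (RatFunc K) (RatFunc K))
    (hD : D RatFunc.X = 1) (v₀ : M →+ ℚ) (v₁ : M →+ ℤ) (e : M)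
    (Dp Dd : (RatFunc K)[M] → (RatFunc K)[M])
    (hDp : ∀ (Q : RatFunc K) (m : M), Dp (single m Q) =
      single (m + e) (2 * ((((v₀ m : ℚ) : RatFunc K) * (1 - RatFunc.X⁻¹) +
        (v₁ m : RatFunc K)) * Q + (RatFunc.X - 1) * D Q)))
    (ρ : M →+ ℚ) (hρe : ρ e = 0) (θ : M) (n : ℤ) (hn : (n : ℚ) = v₀ θ)
    (hDd : ∀ (Q : RatFunc K) (m : M), Dd (single m Q) =
      single (m + θ) (((ρ m : ℚ) : RatFunc K) * RatFunc.X ^ (-n) * Q))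
    (Q : RatFunc K) (m : M) :
    Dp (Dd (single m Q)) - Dd (Dp (single m Q)) =
      single (m + e + θ)
        (2 * ((ρ m : ℚ) : RatFunc K) * ((v₁ θ : ℤ) : RatFunc K) * RatFunc.X ^ (-n) * Q) := by
  set X : RatFunc K := RatFunc.X
  have hX : X ≠ 0 := RatFunc.X_ne_zero
  let a : M →+ RatFunc K := AddMonoidHom.mk'
    (fun m ↦ 2 * (((v₀ m : ℚ) : RatFunc K) * (1 - X⁻¹) + (v₁ m : RatFunc K)))
    fun m m' ↦ by rw [map_add, map_add]; push_cast; ring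
  have hDp' (Q : RatFunc K) (m : M) :
      Dp (single m Q) = single (m + e) (a m * Q + 2 * (X - 1) * D Q) := by
    rw [hDp]
    congr 1
    simp only [a, AddMonoidHom.mk'_apply]
    ring
  have hu : a θ * X ^ (-n) + 2 * (X - 1) * D (X ^ (-n)) = 2 * (v₁ θ : RatFunc K) * X ^ (-n) := by
    have hEuler : X * D (X ^ (-n)) = -n * X ^ (-n) := by
      rw [D.mul_map_zpow_of_map_eq_one hX hD, Int.cast_neg]
    simp only [a, AddMonoidHom.mk'_apply, ← hn, Rat.cast_intCast]
    linear_combination (2 - 2 * X⁻¹) * hEuler +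
      2 * D (X ^ (-n)) * inv_mul_cancel₀ hX
  rw [commutator_single_of_euler D hρe hDp' hDd, hu]
  ring_nf

end Skew

theorem stmt_6_general {K : Type*} [Field K] [CharZero K]
    {M : Type*} [AddCommGroup M]
    (D : Derivation K (RatFunc K) (RatFunc K)) (hD : D RatFunc.X = 1)
    (v₀ : M →+ ℚ)
    (v₁ : M →+ ℤ) (e : M)
    (Dm Dp : Derivation K (AddMonoidAlgebra (RatFunc K) M) (AddMonoidAlgebra (RatFunc K) M))
    (hDm : ∀ (Q : RatFunc K) (m : M), Dm (AddMonoidAlgebra.single m Q) =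
      AddMonoidAlgebra.single (m - e)
        (2 * (((v₀ m : ℚ) : RatFunc K) * Q + RatFunc.X * D Q)))
    (hDp : ∀ (Q : RatFunc K) (m : M), Dp (AddMonoidAlgebra.single m Q) =
      AddMonoidAlgebra.single (m + e)
        (2 * ((((v₀ m : ℚ) : RatFunc K) * (1 - RatFunc.X⁻¹) + (v₁ m : RatFunc K)) * Q +
          (RatFunc.X - 1) * D Q)))
    (ρ : M →+ ℚ) (hρ : ρ ≠ 0) (hρe : ρ e = 0) (θ : M)
    (n : ℤ) (hn : (n : ℚ) = v₀ θ)
    (Dd : Derivation K (AddMonoidAlgebra (RatFunc K) M) (AddMonoidAlgebra (RatFunc K) M))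
    (hDd : ∀ (Q : RatFunc K) (m : M), Dd (AddMonoidAlgebra.single m Q) =
      AddMonoidAlgebra.single (m + θ) (((ρ m : ℚ) : RatFunc K) * RatFunc.X ^ (-n) * Q)) :
    (∀ f, Dd (Dm f) = Dm (Dd f)) ∧
    (∀ (Q : RatFunc K) (m : M),
      Dp (Dd (AddMonoidAlgebra.single m Q)) - Dd (Dp (AddMonoidAlgebra.single m Q)) =
        AddMonoidAlgebra.single (m + e + θ)
          (2 * ((ρ m : ℚ) : RatFunc K) * ((v₁ θ : ℤ) : RatFunc K) * RatFunc.X ^ (-n) * Q)) ∧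
    ((∀ f, Dd (Dp f) = Dp (Dd f)) ↔ v₁ θ = 0) := by
  have commutator := skewPlus_commutator_single D hD v₀ v₁ e Dp Dd hDp ρ hρe θ n hn hDd
  refine ⟨comm_of_comm_single fun Q m ↦
      (skewMinus_commutator_single D hD v₀ e Dm Dd hDm ρ hρe θ n hn hDd Q m).symm,
    commutator, ⟨fun hcomm ↦ ?_, fun hv₁θ ↦ comm_of_comm_single fun Q m ↦ ?_⟩⟩
  · obtain ⟨m, hm⟩ : ∃ m, ρ m ≠ 0 := by
      by_contra! h
      exact hρ (AddMonoidHom.ext h)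
    have h := commutator 1 m
    rw [hcomm, sub_self, eq_comm, single_eq_zero, mul_one] at h
    simpa [hm, zpow_ne_zero n (RatFunc.X_ne_zero (K := K))] using h
  · rw [eq_comm, ← sub_eq_zero, commutator, hv₁θ, Int.cast_zero, mul_zero, zero_mul, zero_mul,
      single_zero]

/-- Skew setting: `v₁ : M → ℤ` a homomorphism, `v₀ : M → ℚ` with `2v₀` a
homomorphism `M → ℤ`, `2v₀(e) = 1`, `v₁(e) = -1`, and the skew derivations
`∂₋(Qχ^m) = 2(v₀(m)Q + tQ')χ^{m-e}`,
`∂₊(Qχ^m) = 2((v₀(m)(1 - 1/t) + v₁(m))Q + (t-1)Q')χ^{m+e}`.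
Let `ρ : M → ℚ` be a nonzero homomorphism with `ρ(e) = 0`, `θ ∈ M` with `v₀(θ) ∈ ℤ` (the
integer `n`), and `∂(Qχ^m) = ρ(m)·t^{-v₀(θ)}·Q·χ^{m+θ}`.  Then `∂` commutes with `∂₋`, the
commutator with `∂₊` is `(∂₊∘∂ − ∂∘∂₊)(Qχ^m) = 2ρ(m)·v₁(θ)·t^{−v₀(θ)}·Q·χ^{m+e+θ}`, and
consequently `∂` commutes with `∂₊` iff `v₁(θ) = 0`. -/
theorem stmt_6 {K : Type*} [Field K] [CharZero K]
    {M : Type*} [AddCommGroup M] [Module.Free ℤ M] [Module.Finite ℤ M]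
    (D : Derivation K (RatFunc K) (RatFunc K)) (hD : D RatFunc.X = 1)
    (v₀ : M →+ ℚ) (h2v₀ : ∀ m : M, ∃ n : ℤ, (n : ℚ) = 2 * v₀ m)
    (v₁ : M →+ ℤ) (e : M) (hv₀e : 2 * v₀ e = 1) (hv₁e : v₁ e = -1)
    (Dm Dp : Derivation K (AddMonoidAlgebra (RatFunc K) M) (AddMonoidAlgebra (RatFunc K) M))
    (hDm : ∀ (Q : RatFunc K) (m : M), Dm (AddMonoidAlgebra.single m Q) =
      AddMonoidAlgebra.single (m - e)
        (2 * (((v₀ m : ℚ) : RatFunc K) * Q + RatFunc.X * D Q)))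
    (hDp : ∀ (Q : RatFunc K) (m : M), Dp (AddMonoidAlgebra.single m Q) =
      AddMonoidAlgebra.single (m + e)
        (2 * ((((v₀ m : ℚ) : RatFunc K) * (1 - RatFunc.X⁻¹) + (v₁ m : RatFunc K)) * Q +
          (RatFunc.X - 1) * D Q)))
    (ρ : M →+ ℚ) (hρ : ρ ≠ 0) (hρe : ρ e = 0) (θ : M)
    (n : ℤ) (hn : (n : ℚ) = v₀ θ)
    (Dd : Derivation K (AddMonoidAlgebra (RatFunc K) M) (AddMonoidAlgebra (RatFunc K) M))
    (hDd : ∀ (Q : RatFunc K) (m : M), Dd (AddMonoidAlgebra.single m Q) =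
      AddMonoidAlgebra.single (m + θ) (((ρ m : ℚ) : RatFunc K) * RatFunc.X ^ (-n) * Q)) :
    (∀ f, Dd (Dm f) = Dm (Dd f)) ∧
    (∀ (Q : RatFunc K) (m : M),
      Dp (Dd (AddMonoidAlgebra.single m Q)) - Dd (Dp (AddMonoidAlgebra.single m Q)) =
        AddMonoidAlgebra.single (m + e + θ)
          (2 * ((ρ m : ℚ) : RatFunc K) * ((v₁ θ : ℤ) : RatFunc K) * RatFunc.X ^ (-n) * Q)) ∧
    ((∀ f, Dd (Dp f) = Dp (Dd f)) ↔ v₁ θ = 0) :=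
  stmt_6_general D hD v₀ v₁ e Dm Dp hDm hDp ρ hρ hρe θ n hn Dd hDd
end

section
/- Let ρ₋, ρ₊, ρ ∈ Hom(M,ℚ) and e, θ ∈ M, and define K-derivations of the group algebra K[M] by ∂₋(χ^m) = ρ₋(m)χ^{m−e}, ∂₊(χ^m) = ρ₊(m)χ^{m+e}, and ∂(χ^m) = ρ(m)χ^{m+θ}. Then ∂ commutes with ∂₋ if and only if ρ₋(θ)·ρ = −ρ(e)·ρ₋ as linear forms on M, and ∂ commutes with ∂₊ if and only if ρ₊(θ)·ρ = ρ(e)·ρ₊ as linear forms on M. -/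
/-!
On `χ^m` both composites of two weighted shifts `χ^m ↦ σᵢ(m) χ^{m+tᵢ}` are multiples of
`χ^{m+t₁+t₂}`, with coefficients `σ₁(m) σ₂(m+t₁)` and `σ₂(m) σ₁(m+t₂)`. For additive weights the
terms `σ₁(m) σ₂(m)` cancel, so the derivations commute iff `σ₁(m) σ₂(t₁) = σ₂(m) σ₁(t₂)`;
`∂₋` is the shift by `-e`.
-/

open AddMonoidAlgebra

theorem AddMonoidAlgebra.forall_apply_eq_iff_single_one {K M : Type*} [Semiring K]
    {f g : K[M] →ₗ[K] K[M]} :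
    (∀ x, f x = g x) ↔ ∀ m, f (single m 1) = g (single m 1) :=
  ⟨fun h _ => h _, fun h => LinearMap.ext_iff.mp <| lhom_ext' fun m => LinearMap.ext_ring (h m)⟩

namespace Derivation

variable {K M : Type*} [CommSemiring K] [AddCommMonoid M]

theorem apply_single_of_apply_single_one
    {D : Derivation K K[M] K[M]} {σ : M → K} {t : M}
    (hD : ∀ m, D (single m 1) = single (m + t) (σ m)) (m : M) (c : K) :
    D (single m c) = single (m + t) (c * σ m) := by
  rw [← mul_one c, ← smul_single', map_smul, hD, smul_single', mul_one]

theorem commute_iff_of_apply_single_one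
    {D₁ D₂ : Derivation K K[M] K[M]} {σ₁ σ₂ : M → K} {t₁ t₂ : M}
    (hD₁ : ∀ m, D₁ (single m 1) = single (m + t₁) (σ₁ m))
    (hD₂ : ∀ m, D₂ (single m 1) = single (m + t₂) (σ₂ m)) :
    (∀ f, D₂ (D₁ f) = D₁ (D₂ f)) ↔
      ∀ m, σ₁ m * σ₂ (m + t₁) = σ₂ m * σ₁ (m + t₂) := by
  refine (forall_apply_eq_iff_single_one (f := (D₂ : K[M] →ₗ[K] K[M]) ∘ₗ D₁)
    (g := (D₁ : K[M] →ₗ[K] K[M]) ∘ₗ D₂)).trans (forall_congr' fun m => ?_)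
  simp only [LinearMap.comp_apply, coeFn_coe, hD₁, hD₂,
    apply_single_of_apply_single_one hD₁, apply_single_of_apply_single_one hD₂,
    add_right_comm m t₁ t₂, single_right_inj]

theorem commute_iff_of_apply_single_one_of_addMonoidHom {K : Type*} [CommRing K]
    {D₁ D₂ : Derivation K K[M] K[M]} {σ₁ σ₂ : M →+ K} {t₁ t₂ : M}
    (hD₁ : ∀ m, D₁ (single m 1) = single (m + t₁) (σ₁ m))
    (hD₂ : ∀ m, D₂ (single m 1) = single (m + t₂) (σ₂ m)) :
    (∀ f, D₂ (D₁ f) = D₁ (D₂ f)) ↔ ∀ m, σ₁ m * σ₂ t₁ = σ₂ m * σ₁ t₂ := by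
  refine (commute_iff_of_apply_single_one hD₁ hD₂).trans (forall_congr' fun m => ?_)
  simp only [map_add, mul_add, mul_comm (σ₁ m) (σ₂ m), add_right_inj]

end Derivation

theorem stmt_7_general {K : Type*} [Field K] [CharZero K]
    {M : Type*} [AddCommGroup M]
    (ρm ρp ρ : M →+ ℚ) (e θ : M)
    (Dm Dp Dd : Derivation K (AddMonoidAlgebra K M) (AddMonoidAlgebra K M))
    (hDm : ∀ m : M, Dm (AddMonoidAlgebra.single m (1 : K)) =
      AddMonoidAlgebra.single (m - e) ((ρm m : K)))
    (hDp : ∀ m : M, Dp (AddMonoidAlgebra.single m (1 : K)) =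
      AddMonoidAlgebra.single (m + e) ((ρp m : K)))
    (hDd : ∀ m : M, Dd (AddMonoidAlgebra.single m (1 : K)) =
      AddMonoidAlgebra.single (m + θ) ((ρ m : K))) :
    ((∀ f, Dd (Dm f) = Dm (Dd f)) ↔ (∀ m : M, ρm θ * ρ m = -(ρ e) * ρm m)) ∧
    ((∀ f, Dd (Dp f) = Dp (Dd f)) ↔ (∀ m : M, ρp θ * ρ m = ρ e * ρp m)) := by
  let cast : ℚ →+ K := (Rat.castHom K).toAddMonoidHom
  have hDm' : ∀ m, Dm (single m 1) = single (m + -e) (cast.comp ρm m) := fun m => by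
    rw [hDm, sub_eq_add_neg]; rfl
  rw [Derivation.commute_iff_of_apply_single_one_of_addMonoidHom (σ₂ := cast.comp ρ) hDm' hDd,
    Derivation.commute_iff_of_apply_single_one_of_addMonoidHom (σ₁ := cast.comp ρp)
      (σ₂ := cast.comp ρ) hDp hDd]
  simp only [cast, AddMonoidHom.comp_apply, RingHom.toAddMonoidHom_eq_coe, AddMonoidHom.coe_coe,
    Rat.coe_castHom, map_neg]
  refine ⟨forall_congr' fun m => ?_, forall_congr' fun m => ?_⟩ <;>
    rw [← (Rat.cast_injective (α := K)).eq_iff] <;> push_cast <;>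
    exact ⟨fun h => by linear_combination -h, fun h => by linear_combination -h⟩

/-- Let `K` be a field of characteristic zero, `M` a finitely generated free
abelian group, `K[M]` its group algebra.  Let `ρ₋, ρ₊, ρ ∈ Hom(M,ℚ)`, `e, θ ∈ M`, and define
derivations of `K[M]` by `∂₋(χ^m) = ρ₋(m)χ^{m−e}`, `∂₊(χ^m) = ρ₊(m)χ^{m+e}`,
`∂(χ^m) = ρ(m)χ^{m+θ}`.  Then `∂` commutes with `∂₋` iff `ρ₋(θ)·ρ = −ρ(e)·ρ₋` as linear forms
on `M`, and `∂` commutes with `∂₊` iff `ρ₊(θ)·ρ = ρ(e)·ρ₊` as linear forms on `M`. -/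
theorem stmt_7 {K : Type*} [Field K] [CharZero K]
    {M : Type*} [AddCommGroup M] [Module.Free ℤ M] [Module.Finite ℤ M]
    (ρm ρp ρ : M →+ ℚ) (e θ : M)
    (Dm Dp Dd : Derivation K (AddMonoidAlgebra K M) (AddMonoidAlgebra K M))
    (hDm : ∀ m : M, Dm (AddMonoidAlgebra.single m (1 : K)) =
      AddMonoidAlgebra.single (m - e) ((ρm m : K)))
    (hDp : ∀ m : M, Dp (AddMonoidAlgebra.single m (1 : K)) =
      AddMonoidAlgebra.single (m + e) ((ρp m : K)))
    (hDd : ∀ m : M, Dd (AddMonoidAlgebra.single m (1 : K)) =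
      AddMonoidAlgebra.single (m + θ) ((ρ m : K))) :
    ((∀ f, Dd (Dm f) = Dm (Dd f)) ↔ (∀ m : M, ρm θ * ρ m = -(ρ e) * ρm m)) ∧
    ((∀ f, Dd (Dp f) = Dp (Dd f)) ↔ (∀ m : M, ρp θ * ρ m = ρ e * ρp m)) :=
  stmt_7_general ρm ρp ρ e θ Dm Dp Dd hDm hDp hDd
end

section
/- Let ρ₋, ρ₊, ρ ∈ Hom(M,ℚ) and e, θ ∈ M, and define K-derivations of the group algebra K[M] by ∂₋(χ^m) = ρ₋(m)χ^{m−e}, ∂₊(χ^m) = ρ₊(m)χ^{m+e}, and ∂(χ^m) = ρ(m)χ^{m+θ}. If ρ₋ and ρ₊ are linearly independent, ρ ≠ 0, and ∂ commutes with both ∂₋ and ∂₊, then ρ(e) = 0 and ρ₋(θ) = ρ₊(θ) = 0. -/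
/-!
Evaluating `[∂, ∂₋] = 0` and `[∂, ∂₊] = 0` on `χ^m` and comparing the coefficients of the single
resulting monomial gives, by additivity of the weights, `ρ₋(m) ρ(-e) = ρ(m) ρ₋(θ)` and
`ρ₊(m) ρ(e) = ρ(m) ρ₊(θ)` for all `m`. If `ρ(e) ≠ 0`, both `ρ₋` and `ρ₊` would be multiples of `ρ`,
contradicting their independence; so `ρ(e) = 0`, and then `ρ ≠ 0` forces `ρ₋(θ) = ρ₊(θ) = 0`.
-/

open AddMonoidAlgebra

section Homogeneous

variable {K M : Type*} [CommSemiring K] [AddCommMonoid M]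

theorem Derivation.map_single_of_map_single_one (D : Derivation K K[M] K[M]) {a : M} {f : M → K}
    (hD : ∀ m, D (single m 1) = single (m + a) (f m)) (m : M) (c : K) :
    D (single m c) = single (m + a) (c * f m) := by
  rw [← mul_one c, ← smul_single', D.map_smul, hD, smul_single', mul_one]

theorem mul_apply_add_eq_of_commute {D₁ D₂ : Derivation K K[M] K[M]} {a b : M} {f g : M → K}
    (h₁ : ∀ m, D₁ (single m 1) = single (m + a) (f m))
    (h₂ : ∀ m, D₂ (single m 1) = single (m + b) (g m))
    (hc : ∀ x, D₁ (D₂ x) = D₂ (D₁ x)) (m : M) :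
    g m * f (m + b) = f m * g (m + a) := by
  have h := hc (single m 1)
  rw [h₂, h₁, D₁.map_single_of_map_single_one h₁, D₂.map_single_of_map_single_one h₂,
    add_right_comm] at h
  exact single_right_inj.mp h

end Homogeneous

theorem AddMonoidHom.mul_apply_eq_of_mul_apply_add_eq {M R : Type*} [AddCommMonoid M] [CommRing R]
    {σ τ : M →+ R} {a b m : M} (h : τ m * σ (m + b) = σ m * τ (m + a)) :
    τ m * σ b = σ m * τ a := by
  rw [map_add, map_add] at h
  linear_combination h

theorem eq_zero_of_mul_eq_mul_of_independent {M F : Type*} [Field F] {σ τ₁ τ₂ : M → F}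
    {c x₁ x₂ : F} (hindep : ∀ a b : F, (∀ m, a * τ₁ m + b * τ₂ m = 0) → a = 0 ∧ b = 0)
    (h₁ : ∀ m, τ₁ m * c = σ m * x₁) (h₂ : ∀ m, τ₂ m * c = σ m * x₂) : c = 0 := by
  by_contra hc
  -- `c (x₂ τ₁ - x₁ τ₂) = σ (x₂ x₁ - x₁ x₂) = 0`
  obtain ⟨hx₂, hx₁⟩ := hindep x₂ (-x₁) fun m =>
    (mul_eq_zero.mp (by linear_combination x₂ * h₁ m - x₁ * h₂ m :
      c * (x₂ * τ₁ m + -x₁ * τ₂ m) = 0)).resolve_left hc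
  have hτ₁ : ∀ m, 1 * τ₁ m + 0 * τ₂ m = 0 := fun m => by
    simpa [neg_eq_zero.mp hx₁, hc] using h₁ m
  exact one_ne_zero (hindep 1 0 hτ₁).1

theorem stmt_8_general {K : Type*} [Field K] [CharZero K]
    {M : Type*} [AddCommGroup M]
    (ρm ρp ρ : M →+ ℚ) (e θ : M)
    (Dm Dp Dd : Derivation K (AddMonoidAlgebra K M) (AddMonoidAlgebra K M))
    (hDm : ∀ m : M, Dm (AddMonoidAlgebra.single m (1 : K)) =
      AddMonoidAlgebra.single (m - e) ((ρm m : K)))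
    (hDp : ∀ m : M, Dp (AddMonoidAlgebra.single m (1 : K)) =
      AddMonoidAlgebra.single (m + e) ((ρp m : K)))
    (hDd : ∀ m : M, Dd (AddMonoidAlgebra.single m (1 : K)) =
      AddMonoidAlgebra.single (m + θ) ((ρ m : K)))
    (hindep : ∀ a b : ℚ, (∀ m : M, a * ρm m + b * ρp m = 0) → a = 0 ∧ b = 0)
    (hρ : ρ ≠ 0)
    (hcm : ∀ f, Dd (Dm f) = Dm (Dd f)) (hcp : ∀ f, Dd (Dp f) = Dp (Dd f)) :
    ρ e = 0 ∧ ρm θ = 0 ∧ ρp θ = 0 := by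
  simp only [sub_eq_add_neg] at hDm
  have hm (m : M) : ρm m * ρ (-e) = ρ m * ρm θ :=
    AddMonoidHom.mul_apply_eq_of_mul_apply_add_eq
      (by exact_mod_cast mul_apply_add_eq_of_commute hDd hDm hcm m)
  have hp (m : M) : ρp m * ρ e = ρ m * ρp θ :=
    AddMonoidHom.mul_apply_eq_of_mul_apply_add_eq
      (by exact_mod_cast mul_apply_add_eq_of_commute hDd hDp hcp m)
  have he : ρ e = 0 := by
    have h := eq_zero_of_mul_eq_mul_of_independent hindep hm
      fun m => by rw [map_neg, mul_neg, hp, ← mul_neg]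
    rwa [map_neg, neg_eq_zero] at h
  obtain ⟨m₀, hm₀⟩ : ∃ m, ρ m ≠ 0 := by
    by_contra! h
    exact hρ (AddMonoidHom.ext h)
  refine ⟨he, ?_, ?_⟩
  · simpa [he, hm₀] using (hm m₀).symm
  · simpa [he, hm₀] using (hp m₀).symm

/-- Setting of Statement 7.  If `ρ₋` and `ρ₊` are linearly independent (over
`ℚ`), `ρ ≠ 0`, and `∂` commutes with both `∂₋` and `∂₊`, then `ρ(e) = 0` and
`ρ₋(θ) = ρ₊(θ) = 0`. -/
theorem stmt_8 {K : Type*} [Field K] [CharZero K]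
    {M : Type*} [AddCommGroup M] [Module.Free ℤ M] [Module.Finite ℤ M]
    (ρm ρp ρ : M →+ ℚ) (e θ : M)
    (Dm Dp Dd : Derivation K (AddMonoidAlgebra K M) (AddMonoidAlgebra K M))
    (hDm : ∀ m : M, Dm (AddMonoidAlgebra.single m (1 : K)) =
      AddMonoidAlgebra.single (m - e) ((ρm m : K)))
    (hDp : ∀ m : M, Dp (AddMonoidAlgebra.single m (1 : K)) =
      AddMonoidAlgebra.single (m + e) ((ρp m : K)))
    (hDd : ∀ m : M, Dd (AddMonoidAlgebra.single m (1 : K)) =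
      AddMonoidAlgebra.single (m + θ) ((ρ m : K)))
    (hindep : ∀ a b : ℚ, (∀ m : M, a * ρm m + b * ρp m = 0) → a = 0 ∧ b = 0)
    (hρ : ρ ≠ 0)
    (hcm : ∀ f, Dd (Dm f) = Dm (Dd f)) (hcp : ∀ f, Dd (Dp f) = Dp (Dd f)) :
    ρ e = 0 ∧ ρm θ = 0 ∧ ρp θ = 0 :=
  stmt_8_general ρm ρp ρ e θ Dm Dp Dd hDm hDp hDd hindep hρ hcm hcp
end

section
/- The K-linear maps ∂₋, ∂₊, δ of K(t)[M] determined by ∂₋(Qχ^m) = (v₀(m)Q + tQ′)χ^{m−e}, ∂₊(Qχ^m) = (v₁(m)Q + (t−1)Q′)χ^{m+e}, and δ(Qχ^m) = (v₀(m) − v₁(m))·Q·χ^m are K-derivations of K(t)[M] and satisfy the sl₂-relations ∂₊∘∂₋ − ∂₋∘∂₊ = δ, δ∘∂₊ − ∂₊∘δ = 2∂₊, and δ∘∂₋ − ∂₋∘δ = −2∂₋. -/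
/-!
All three operators have the shape `Qχ^m ↦ (w(m)Q + P·Q′)χ^{m+s}` for a weight `w : M →+ ℤ`, a
shift `s ∈ M` and a coefficient `P ∈ K(t)`. Every such map is a derivation, checked on monomials,
and the commutator of two of them is again of this shape, with parameters computed from the
Leibniz rule on `K(t)`. The sl₂-relations thereby reduce to identities between the parameters,
which follow from `v₀(e) = 1`, `v₁(e) = −1` and `t′ = 1`.
-/

namespace AddMonoidAlgebra

variable {K R M : Type*} [CommRing K] [CommRing R] [Algebra K R] [AddCommMonoid M]

theorem derivation_ext {N : Type*} [AddCommMonoid N] [Module R[M] N] [Module K N]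
    {D₁ D₂ : Derivation K R[M] N} (h : ∀ m Q, D₁ (single m Q) = D₂ (single m Q)) : D₁ = D₂ :=
  Derivation.ext <| LinearMap.congr_fun <|
    lhom_ext' (f := (D₁ : R[M] →ₗ[K] N)) (g := D₂) fun m ↦ LinearMap.ext (h m)

variable (D : Derivation K R R) (w : M →+ ℤ) (s : M) (P : R)

noncomputable def shiftLinearMap : R[M] →ₗ[K] R[M] :=
  (Finsupp.lsum K fun m ↦ (lsingle (m + s)).comp
    ((w m : R) • LinearMap.id + P • D.toLinearMap)) ∘ₗ (coeffLinearEquiv K).toLinearMap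

theorem shiftLinearMap_single (m : M) (Q : R) :
    shiftLinearMap D w s P (single m Q) = single (m + s) ((w m : R) * Q + P * D Q) := by
  simp [shiftLinearMap]

theorem shiftLinearMap_mul (f g : R[M]) :
    shiftLinearMap D w s P (f * g) =
      f • shiftLinearMap D w s P g + g • shiftLinearMap D w s P f := by
  induction f using induction_linear with
  | zero => simp
  | add f₁ f₂ h₁ h₂ => simp only [add_mul, add_smul, smul_add, map_add, h₁, h₂]; abel
  | single m Q =>
    induction g using induction_linear with
    | zero => simp
    | add g₁ g₂ h₁ h₂ => simp only [mul_add, add_smul, smul_add, map_add, h₁, h₂]; abel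
    | single n Q' =>
      simp only [single_mul_single, shiftLinearMap_single, smul_eq_mul]
      rw [show m + (n + s) = m + n + s by abel, show n + (m + s) = m + n + s by abel,
        ← single_add]
      congr 1
      simp only [map_add, Derivation.leibniz, smul_eq_mul, Int.cast_add]
      ring

noncomputable def shiftDerivation : Derivation K R[M] R[M] :=
  Derivation.mk' (shiftLinearMap D w s P) (shiftLinearMap_mul D w s P)

theorem shiftDerivation_single (m : M) (Q : R) :
    shiftDerivation D w s P (single m Q) = single (m + s) ((w m : R) * Q + P * D Q) :=
  shiftLinearMap_single D w s P m Q

theorem lie_shiftDerivation (w₁ w₂ : M →+ ℤ) (s₁ s₂ : M) (P₁ P₂ : R) :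
    ⁅shiftDerivation D w₁ s₁ P₁, shiftDerivation D w₂ s₂ P₂⁆ =
      shiftDerivation D (w₁ s₂ • w₂ - w₂ s₁ • w₁) (s₁ + s₂)
        (w₁ s₂ • P₂ - w₂ s₁ • P₁ + P₁ * D P₂ - P₂ * D P₁) := by
  refine derivation_ext fun m Q ↦ ?_
  simp only [Derivation.commutator_apply, shiftDerivation_single]
  rw [show m + s₂ + s₁ = m + (s₁ + s₂) by abel, add_assoc, ← single_sub]
  congr 1
  simp only [map_add, Derivation.leibniz, Derivation.map_intCast, smul_eq_mul, mul_zero,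
    add_zero, AddMonoidHom.sub_apply, AddMonoidHom.smul_apply, Int.cast_add, Int.cast_sub,
    Int.cast_mul, zsmul_eq_mul]
  ring

theorem zsmul_shiftDerivation (n : ℤ) :
    n • shiftDerivation D w s P = shiftDerivation D (n • w) s (n • P) := by
  refine derivation_ext fun m Q ↦ ?_
  simp only [Derivation.smul_apply, shiftDerivation_single, smul_single, AddMonoidHom.smul_apply,
    zsmul_eq_mul, smul_eq_mul]
  congr 1
  push_cast
  ring

end AddMonoidAlgebra

theorem stmt_9_general {K : Type*} [Field K]
    {M : Type*} [AddCommGroup M]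
    (D : Derivation K (RatFunc K) (RatFunc K)) (hD : D RatFunc.X = 1)
    (v₀ v₁ : M →+ ℤ) (e : M) (hv₀e : v₀ e = 1) (hv₁e : v₁ e = -1) :
    ∃ Dm Dp Dd : Derivation K (AddMonoidAlgebra (RatFunc K) M) (AddMonoidAlgebra (RatFunc K) M),
      (∀ (Q : RatFunc K) (m : M), Dm (AddMonoidAlgebra.single m Q) =
        AddMonoidAlgebra.single (m - e) ((v₀ m : RatFunc K) * Q + RatFunc.X * D Q)) ∧
      (∀ (Q : RatFunc K) (m : M), Dp (AddMonoidAlgebra.single m Q) =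
        AddMonoidAlgebra.single (m + e) ((v₁ m : RatFunc K) * Q + (RatFunc.X - 1) * D Q)) ∧
      (∀ (Q : RatFunc K) (m : M), Dd (AddMonoidAlgebra.single m Q) =
        AddMonoidAlgebra.single m (((v₀ m - v₁ m : ℤ) : RatFunc K) * Q)) ∧
      (∀ f, Dp (Dm f) - Dm (Dp f) = Dd f) ∧
      (∀ f, Dd (Dp f) - Dp (Dd f) = 2 • Dp f) ∧
      (∀ f, Dd (Dm f) - Dm (Dd f) = -(2 • Dm f)) := by
  open AddMonoidAlgebra in
  let Dm := shiftDerivation D v₀ (-e) RatFunc.X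
  let Dp := shiftDerivation D v₁ e (RatFunc.X - 1)
  let Dd := shiftDerivation D (v₀ - v₁) 0 0
  have hpm : ⁅Dp, Dm⁆ = Dd := by
    rw [lie_shiftDerivation]
    congr 1
    · ext; simp [hv₀e, hv₁e]
    · simp
    · simp [hD, hv₀e, hv₁e]
  have hdp : ⁅Dd, Dp⁆ = (2 : ℤ) • Dp := by
    rw [lie_shiftDerivation, zsmul_shiftDerivation]
    congr 1
    · ext; simp [hv₀e, hv₁e]
    · simp
    · simp [hv₀e, hv₁e]
  have hdm : ⁅Dd, Dm⁆ = (-2 : ℤ) • Dm := by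
    rw [lie_shiftDerivation, zsmul_shiftDerivation]
    congr 1
    · ext; simp [hv₀e, hv₁e]
    · simp
    · simp [hv₀e, hv₁e]
  refine ⟨Dm, Dp, Dd, fun Q m ↦ ?_, fun Q m ↦ ?_, fun Q m ↦ ?_, fun f ↦ ?_, fun f ↦ ?_, fun f ↦ ?_⟩
  · rw [shiftDerivation_single, sub_eq_add_neg]
  · rw [shiftDerivation_single]
  · simp [Dd, shiftDerivation_single]
  · rw [← Derivation.commutator_apply, hpm]
  · rw [← Derivation.commutator_apply, hdp, Derivation.smul_apply, two_zsmul, two_nsmul]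
  · rw [← Derivation.commutator_apply, hdm, Derivation.smul_apply, neg_smul, two_zsmul, two_nsmul]

/-- Reflexive sl₂-triple: given `v₀ v₁ : M → ℤ` with `v₀(e) = 1`,
`v₁(e) = −1`, the `K`-linear maps of `K(t)[M]` determined by
`∂₋(Qχ^m) = (v₀(m)Q + tQ′)χ^{m−e}`, `∂₊(Qχ^m) = (v₁(m)Q + (t−1)Q′)χ^{m+e}`, and
`δ(Qχ^m) = (v₀(m) − v₁(m))·Q·χ^m` are `K`-derivations and satisfy the sl₂-relations
`[∂₊,∂₋] = δ`, `[δ,∂₊] = 2∂₊`, `[δ,∂₋] = −2∂₋`. -/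
theorem stmt_9 {K : Type*} [Field K] [CharZero K]
    {M : Type*} [AddCommGroup M] [Module.Free ℤ M] [Module.Finite ℤ M]
    (D : Derivation K (RatFunc K) (RatFunc K)) (hD : D RatFunc.X = 1)
    (v₀ v₁ : M →+ ℤ) (e : M) (hv₀e : v₀ e = 1) (hv₁e : v₁ e = -1) :
    ∃ Dm Dp Dd : Derivation K (AddMonoidAlgebra (RatFunc K) M) (AddMonoidAlgebra (RatFunc K) M),
      (∀ (Q : RatFunc K) (m : M), Dm (AddMonoidAlgebra.single m Q) =
        AddMonoidAlgebra.single (m - e) ((v₀ m : RatFunc K) * Q + RatFunc.X * D Q)) ∧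
      (∀ (Q : RatFunc K) (m : M), Dp (AddMonoidAlgebra.single m Q) =
        AddMonoidAlgebra.single (m + e) ((v₁ m : RatFunc K) * Q + (RatFunc.X - 1) * D Q)) ∧
      (∀ (Q : RatFunc K) (m : M), Dd (AddMonoidAlgebra.single m Q) =
        AddMonoidAlgebra.single m (((v₀ m - v₁ m : ℤ) : RatFunc K) * Q)) ∧
      (∀ f, Dp (Dm f) - Dm (Dp f) = Dd f) ∧
      (∀ f, Dd (Dp f) - Dp (Dd f) = 2 • Dp f) ∧
      (∀ f, Dd (Dm f) - Dm (Dd f) = -(2 • Dm f)) :=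
  stmt_9_general D hD v₀ v₁ e hv₀e hv₁e
end

section
/- The center of the semidirect product G = SL₂(K) ⋊_ε T consists exactly of the elements ((a, 0; 0, a⁻¹), t) with a ∈ K∖{0}, t ∈ T, and a² = χ(t). -/
/-! The twist `ε t` is conjugation by `diag(1, χ t)`, so `(M, s)` commutes with every `(A, 1)`
exactly when `M * diag(1, χ s)` commutes with all of `SL₂(K)`, i.e. (as `SL₂(K)` contains the
transvections) when it is scalar. For `det M = 1` this means `M = diag(a, a⁻¹)` with `a² = χ s`;
such an `M` is fixed by every `ε t`, so `(M, s)` then commutes with all of `G`. -/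

open Matrix

theorem mul_conj_eq_mul_iff_commute {α : Type*} [Monoid α] {D D' : α} (hDD' : D * D' = 1)
    (hD'D : D' * D = 1) (M A : α) : M * (D * A * D') = A * M ↔ Commute A (M * D) := by
  constructor
  · intro h
    calc A * (M * D) = M * (D * A * D') * D := by rw [h, mul_assoc]
      _ = M * D * A := by simp only [mul_assoc, hD'D, mul_one]
  · intro h
    calc M * (D * A * D') = A * (M * D) * D' := by rw [h.eq]; simp only [mul_assoc]
      _ = A * M := by simp only [mul_assoc, hDD', mul_one]

theorem Matrix.SpecialLinearGroup.forall_commute_iff_mem_range_scalar {n R : Type*} [Fintype n]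
    [DecidableEq n] [CommRing R] {M : Matrix n n R} :
    (∀ A : SpecialLinearGroup n R, Commute (A : Matrix n n R) M) ↔ M ∈ Set.range (scalar n) :=
  ⟨fun h => mem_range_scalar_of_commute_transvectionStruct fun t => h ⟨t.toMatrix, t.det⟩,
    fun ⟨_, hc⟩ _ => hc ▸ (scalar_commute _ (Commute.all _) _).symm⟩

theorem SemidirectProduct.mem_center_iff {N G : Type*} [Group N] [Group G] {φ : G →* MulAut N}
    {g : N ⋊[φ] G} :
    g ∈ Subgroup.center (N ⋊[φ] G) ↔
      g.right ∈ Subgroup.center G ∧ ∀ (n : N) (h : G), g.left * φ g.right n = n * φ h g.left := by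
  simp only [Subgroup.mem_center_iff]
  constructor
  · intro hg
    refine ⟨fun h => by simpa using congrArg right (hg (inr h)), fun n h => ?_⟩
    simpa using (congrArg left (hg ⟨n, h⟩)).symm
  · rintro ⟨hright, hleft⟩ ⟨n, h⟩
    ext
    · exact (hleft n h).symm
    · exact hright h

theorem Matrix.diagonal_mul_mul_diagonal_fin_two {K : Type*} [Field K] {u : K} (hu : u ≠ 0)
    (A : Matrix (Fin 2) (Fin 2) K) :
    diagonal ![1, u] * A * diagonal ![1, u⁻¹] = !![A 0 0, u⁻¹ * A 0 1; u * A 1 0, A 1 1] := by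
  ext i j
  fin_cases i <;> fin_cases j <;> simp [field]

theorem Matrix.SpecialLinearGroup.mul_diagonal_mem_range_scalar_iff {K : Type*} [Field K] {u : K}
    (hu : u ≠ 0) (M : SpecialLinearGroup (Fin 2) K) :
    (M : Matrix (Fin 2) (Fin 2) K) * diagonal ![1, u] ∈ Set.range (scalar (Fin 2)) ↔
      ∃ a : K, a ≠ 0 ∧ (M : Matrix (Fin 2) (Fin 2) K) = !![a, 0; 0, a⁻¹] ∧ a ^ 2 = u := by
  have hdet : M 0 0 * M 1 1 - M 0 1 * M 1 0 = 1 := by rw [← det_fin_two]; exact M.2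
  constructor
  · rintro ⟨c, hscalar⟩
    have entry (i j : Fin 2) := congrFun (congrFun hscalar i) j
    have ha : c = M 0 0 := by simpa using entry 0 0
    have hb : M 0 1 = 0 := by simpa [hu] using entry 0 1
    have hc : M 1 0 = 0 := by simpa using (entry 1 0).symm
    have hd : c = M 1 1 * u := by simpa using entry 1 1
    have hdet' : M 0 0 * M 1 1 = 1 := by simpa [hb, hc] using hdet
    refine ⟨M 0 0, left_ne_zero_of_mul_eq_one hdet', ?_, ?_⟩
    · ext i j
      fin_cases i <;> fin_cases j <;> simp [hb, hc, eq_inv_of_mul_eq_one_right hdet']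
    · linear_combination M 0 0 * (hd - ha) + u * hdet'
  · rintro ⟨a, -, hM, rfl⟩
    refine ⟨a, ?_⟩
    rw [hM]
    ext i j
    fin_cases i <;> fin_cases j <;> simp [field, sq]

section DiagonalTwist

variable {K : Type*} [Field K] {T : Type*} [Monoid T]

def IsDiagonalTwist (χ : T →* Kˣ) (ε : T →* MulAut (SpecialLinearGroup (Fin 2) K)) : Prop :=
  ∀ (t : T) (A : SpecialLinearGroup (Fin 2) K),
    ((ε t A : SpecialLinearGroup (Fin 2) K) : Matrix (Fin 2) (Fin 2) K) =
      !![(A : Matrix (Fin 2) (Fin 2) K) 0 0, ((χ t : K))⁻¹ * (A : Matrix (Fin 2) (Fin 2) K) 0 1;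
         (χ t : K) * (A : Matrix (Fin 2) (Fin 2) K) 1 0, (A : Matrix (Fin 2) (Fin 2) K) 1 1]

variable {χ : T →* Kˣ} {ε : T →* MulAut (SpecialLinearGroup (Fin 2) K)}

namespace IsDiagonalTwist

theorem coe_apply_eq_conj (hε : IsDiagonalTwist χ ε) (t : T) (A : SpecialLinearGroup (Fin 2) K) :
    ((ε t A : SpecialLinearGroup (Fin 2) K) : Matrix (Fin 2) (Fin 2) K) =
      diagonal ![1, (χ t : K)] * A * diagonal ![1, (χ t : K)⁻¹] := by
  rw [hε, diagonal_mul_mul_diagonal_fin_two (χ t).ne_zero]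

theorem apply_eq_self_of_coe_eq_diagonal (hε : IsDiagonalTwist χ ε) (t : T)
    {M : SpecialLinearGroup (Fin 2) K} {a b : K}
    (hM : (M : Matrix (Fin 2) (Fin 2) K) = !![a, 0; 0, b]) : ε t M = M := by
  ext i j
  rw [hε, hM]
  fin_cases i <;> fin_cases j <;> simp

theorem forall_mul_apply_eq_iff (hε : IsDiagonalTwist χ ε) (M : SpecialLinearGroup (Fin 2) K)
    (s : T) :
    (∀ A, M * ε s A = A * M) ↔
      ∃ a : K, a ≠ 0 ∧ (M : Matrix (Fin 2) (Fin 2) K) = !![a, 0; 0, a⁻¹] ∧ a ^ 2 = χ s := by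
  have hχ : (χ s : K) ≠ 0 := (χ s).ne_zero
  have hcomm (A : SpecialLinearGroup (Fin 2) K) :
      M * ε s A = A * M ↔
        Commute (A : Matrix (Fin 2) (Fin 2) K) (M * diagonal ![1, (χ s : K)]) := by
    have hinv : diagonal ![1, (χ s : K)] * diagonal ![1, (χ s : K)⁻¹] = 1 := by
      ext i j; fin_cases i <;> fin_cases j <;> simp [hχ]
    rw [← mul_conj_eq_mul_iff_commute hinv (mul_eq_one_comm.mp hinv), ← hε.coe_apply_eq_conj]
    exact Subtype.ext_iff
  rw [forall_congr' hcomm, SpecialLinearGroup.forall_commute_iff_mem_range_scalar,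
    SpecialLinearGroup.mul_diagonal_mem_range_scalar_iff hχ]

end IsDiagonalTwist

end DiagonalTwist

theorem stmt_13_general {K : Type*} [Field K] {T : Type*} [CommGroup T]
    (χ : T →* Kˣ)
    (ε : T →* MulAut (Matrix.SpecialLinearGroup (Fin 2) K))
    (hε : ∀ (t : T) (A : Matrix.SpecialLinearGroup (Fin 2) K),
      ((ε t A : Matrix.SpecialLinearGroup (Fin 2) K) : Matrix (Fin 2) (Fin 2) K) =
        !![(A : Matrix (Fin 2) (Fin 2) K) 0 0, ((χ t : K))⁻¹ * (A : Matrix (Fin 2) (Fin 2) K) 0 1;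
           (χ t : K) * (A : Matrix (Fin 2) (Fin 2) K) 1 0, (A : Matrix (Fin 2) (Fin 2) K) 1 1]) :
    ∀ g : Matrix.SpecialLinearGroup (Fin 2) K ⋊[ε] T,
      g ∈ Subgroup.center (Matrix.SpecialLinearGroup (Fin 2) K ⋊[ε] T) ↔
        ∃ a : K, a ≠ 0 ∧
          (g.left : Matrix (Fin 2) (Fin 2) K) = !![a, 0; 0, a⁻¹] ∧
          a ^ 2 = (χ g.right : K) := by
  have hε : IsDiagonalTwist χ ε := hε
  intro g
  rw [SemidirectProduct.mem_center_iff, ← hε.forall_mul_apply_eq_iff]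
  simp only [CommGroup.center_eq_top, Subgroup.mem_top, true_and]
  constructor
  · intro hcomm A
    simpa using hcomm A 1
  · intro hcomm A t
    obtain ⟨a, -, hM, -⟩ := (hε.forall_mul_apply_eq_iff _ _).1 hcomm
    rw [hε.apply_eq_self_of_coe_eq_diagonal t hM]
    exact hcomm A

/-- Let `K` be a field of characteristic zero, `T` an abelian group,
`χ : T → Kˣ` a group homomorphism, and `ε : T → Aut(SL₂(K))` the homomorphism with
`ε(t)(a,b;c,d) = (a, χ(t)⁻¹b; χ(t)c, d)`.  The center of the semidirect product
`G = SL₂(K) ⋊_ε T` consists exactly of the elements `((a,0;0,a⁻¹), t)` with `a ∈ K∖{0}`,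
`t ∈ T`, and `a² = χ(t)`. -/
theorem stmt_13 {K : Type*} [Field K] [CharZero K] {T : Type*} [CommGroup T]
    (χ : T →* Kˣ)
    (ε : T →* MulAut (Matrix.SpecialLinearGroup (Fin 2) K))
    (hε : ∀ (t : T) (A : Matrix.SpecialLinearGroup (Fin 2) K),
      ((ε t A : Matrix.SpecialLinearGroup (Fin 2) K) : Matrix (Fin 2) (Fin 2) K) =
        !![(A : Matrix (Fin 2) (Fin 2) K) 0 0, ((χ t : K))⁻¹ * (A : Matrix (Fin 2) (Fin 2) K) 0 1;
           (χ t : K) * (A : Matrix (Fin 2) (Fin 2) K) 1 0, (A : Matrix (Fin 2) (Fin 2) K) 1 1]) :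
    ∀ g : Matrix.SpecialLinearGroup (Fin 2) K ⋊[ε] T,
      g ∈ Subgroup.center (Matrix.SpecialLinearGroup (Fin 2) K ⋊[ε] T) ↔
        ∃ a : K, a ≠ 0 ∧
          (g.left : Matrix (Fin 2) (Fin 2) K) = !![a, 0; 0, a⁻¹] ∧
          a ^ 2 = (χ g.right : K) :=
  stmt_13_general χ ε hε
end

section
/- Let R = K[a,b,c,d]/(ad − bc − 1), and let the multiplicative group K∖{0} act on R by K-algebra automorphisms via λ·a = λa, λ·b = λ⁻¹b, λ·c = λc, λ·d = λ⁻¹d. Then the subalgebra R^{K∖{0}} of invariants equals the K-subalgebra of R generated by ab, cd, and ad + bc, and the K-algebra homomorphism K[x,y,z]/(z² − 4xy − 1) → R sending x ↦ ab, y ↦ cd, z ↦ ad + bc is injective with image R^{K∖{0}}; in particular R^{K∖{0}} ≅ K[x,y,z]/(z² − 4xy − 1). -/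
open MvPolynomial

set_option synthInstance.maxHeartbeats 1000000
set_option maxHeartbeats 1000000

/-- The coordinate ring `R = K[a,b,c,d]/(ad − bc − 1)` of `SL₂`. -/
noncomputable abbrev SL2Ring (K : Type*) [Field K] : Type _ :=
  MvPolynomial (Fin 4) K ⧸
    (Ideal.span {X 0 * X 3 - X 1 * X 2 - 1} : Ideal (MvPolynomial (Fin 4) K))

/-- the class of `a` in `R` -/
noncomputable abbrev sl2a (K : Type*) [Field K] : SL2Ring K := Ideal.Quotient.mk _ (X 0)
/-- the class of `b` in `R` -/
noncomputable abbrev sl2b (K : Type*) [Field K] : SL2Ring K := Ideal.Quotient.mk _ (X 1)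
/-- the class of `c` in `R` -/
noncomputable abbrev sl2c (K : Type*) [Field K] : SL2Ring K := Ideal.Quotient.mk _ (X 2)
/-- the class of `d` in `R` -/
noncomputable abbrev sl2d (K : Type*) [Field K] : SL2Ring K := Ideal.Quotient.mk _ (X 3)

/-- The ring `K[x,y,z]/(z² − 4xy − 1)`. -/
noncomputable abbrev XYZRing (K : Type*) [Field K] : Type _ :=
  MvPolynomial (Fin 3) K ⧸
    (Ideal.span {X 2 ^ 2 - 4 * (X 0 * X 1) - 1} : Ideal (MvPolynomial (Fin 3) K))
/-!
Give `a, c` weight `1` and `b, d` weight `-1`. The relation `ad - bc - 1` is homogeneous of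
weight `0`, and `λ` multiplies a polynomial of weight `n` by `λ ^ n`. Since `2` is not a root of
unity, an element of `R` fixed by `λ = 2` is the class of a polynomial of weight `0`, that is, of a
polynomial in `ab, bc, ad, cd`; and `ad = (z + 1) / 2`, `bc = (z - 1) / 2` for `z = ad + bc`.

Modulo `z² - 4xy - 1`, every element of `K[x,y,z]` is `r₀ + r₁ z` with `r₀, r₁ ∈ K[x,y]`. The point
`(a, b, c, d) = (T, 1, X, T⁻¹(1 + X))` of `SL₂(K[T,T⁻¹][X])` sends `x, y, z` to `T`,
`T⁻¹(X + X²)` and `1 + 2X`. The substitution `X ↦ -1 - X` fixes `X + X²` and negates `1 + 2X`,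
which separates `r₀` from `r₁`, and `x ↦ T, y ↦ T⁻¹X` is injective on `K[x,y]`.
-/

namespace MvPolynomial

section WeightScaling

variable {R σ : Type*} [CommRing R]

noncomputable def weightScaling (w : σ → ℤ) (u : Rˣ) :
    MvPolynomial σ R →ₐ[R] MvPolynomial σ R :=
  aeval fun i => ((u ^ w i : Rˣ) : R) • X i

theorem weightScaling_monomial (w : σ → ℤ) (u : Rˣ) (d : σ →₀ ℕ) (r : R) :
    weightScaling w u (monomial d r) = ((u ^ Finsupp.weight w d : Rˣ) : R) • monomial d r := by
  classical
  induction d using Finsupp.induction_linear generalizing r with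
  | zero => simp [weightScaling, ← C_apply]
  | add f g hf hg =>
    rw [← mul_one r, ← monomial_mul, map_mul, hf, hg, map_add, zpow_add, Units.val_mul,
      smul_mul_smul_comm]
  | single i n =>
    rw [← mul_one r, ← C_mul_monomial, ← X_pow_eq_monomial, map_mul, weightScaling, aeval_C,
      map_pow, aeval_X, smul_pow, mul_smul_comm, Finsupp.weight_single,
      ← Units.val_pow_eq_pow_val, ← zpow_natCast, ← zpow_mul, nsmul_eq_mul, mul_comm (n : ℤ),
      algebraMap_eq]

theorem coeff_weightScaling (w : σ → ℤ) (u : Rˣ) (d : σ →₀ ℕ) (p : MvPolynomial σ R) :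
    coeff d (weightScaling w u p) = ((u ^ Finsupp.weight w d : Rˣ) : R) * coeff d p := by
  classical
  induction p using MvPolynomial.induction_on' with
  | monomial e r =>
    rw [weightScaling_monomial, coeff_smul, coeff_monomial, smul_eq_mul]
    split_ifs with h
    · rw [h]
    · rw [mul_zero, mul_zero]
  | add p q hp hq => rw [map_add, coeff_add, coeff_add, hp, hq, mul_add]

theorem weightedHomogeneousComponent_weightScaling (w : σ → ℤ) (u : Rˣ) (n : ℤ)
    (p : MvPolynomial σ R) :
    weightedHomogeneousComponent w n (weightScaling w u p) =
      ((u ^ n : Rˣ) : R) • weightedHomogeneousComponent w n p := by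
  classical
  ext d
  rw [coeff_smul, coeff_weightedHomogeneousComponent, coeff_weightedHomogeneousComponent,
    coeff_weightScaling, smul_eq_mul]
  split_ifs with h
  · rw [h]
  · rw [mul_zero]

end WeightScaling

section HomogeneousIdeal

attribute [local instance] weightedGradedAlgebra

variable {K σ : Type*} [Field K] {w : σ → ℤ}

theorem isHomogeneous_span_singleton_of_isWeightedHomogeneous {f : MvPolynomial σ K} {m : ℤ}
    (hf : f.IsWeightedHomogeneous w m) :
    (Ideal.span {f}).IsHomogeneous (weightedHomogeneousSubmodule K w) :=
  Ideal.homogeneous_span _ _ fun _ hx => ⟨m, (Set.mem_singleton_iff.mp hx) ▸ hf⟩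

theorem sub_weightedHomogeneousComponent_zero_mem {I : Ideal (MvPolynomial σ K)}
    (hI : I.IsHomogeneous (weightedHomogeneousSubmodule K w)) {u : Kˣ}
    (hu : ∀ n : ℤ, n ≠ 0 → u ^ n ≠ 1) {p : MvPolynomial σ K}
    (hp : weightScaling w u p - p ∈ I) :
    p - weightedHomogeneousComponent w 0 p ∈ I := by
  rw [mem_iff_weightedHomogeneousComponent_mem K w hI] at hp ⊢
  intro n
  rw [map_sub, weightedHomogeneousComponent_of_mem (weightedHomogeneousComponent_mem w p 0)]
  split_ifs with hn
  · rw [hn, sub_self]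
    exact I.zero_mem
  · have hu' : ((u ^ n : Kˣ) : K) - 1 ≠ 0 :=
      sub_ne_zero.mpr (Units.val_eq_one.not.mpr (hu n hn))
    have h : (((u ^ n : Kˣ) : K) - 1) • weightedHomogeneousComponent w n p ∈ I := by
      rw [sub_smul, one_smul, ← weightedHomogeneousComponent_weightScaling, ← map_sub]
      exact hp n
    rw [sub_zero, ← inv_smul_smul₀ hu' (weightedHomogeneousComponent w n p)]
    exact Submodule.smul_of_tower_mem I _ h

end HomogeneousIdeal

end MvPolynomial

theorem two_zpow_ne_one {K : Type*} [Field K] [CharZero K] {n : ℤ} (hn : n ≠ 0) :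
    (2 : K) ^ n ≠ 1 := by
  intro h
  have h' : (2 : ℚ) ^ n = 1 := Rat.cast_injective (α := K) (by push_cast; exact h)
  exact hn ((zpow_eq_one_iff_right₀ zero_le_two (by norm_num)).mp h')

section WeightZero

def sl2Weight : Fin 4 → ℤ := ![1, -1, 1, -1]

theorem weight_sl2Weight (d : Fin 4 →₀ ℕ) :
    Finsupp.weight sl2Weight d = (d 0 : ℤ) - d 1 + d 2 - d 3 := by
  rw [Finsupp.weight_apply, Finsupp.sum_fintype _ _ fun i => zero_smul ℕ (sl2Weight i),
    Fin.sum_univ_four]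
  simp only [sl2Weight, Matrix.cons_val_zero, Matrix.cons_val_one, Matrix.cons_val,
    Int.nsmul_eq_mul, mul_one, mul_neg]
  ring

variable {R : Type*} [CommRing R]

theorem monomial_mem_adjoin_of_weight_eq_zero {d : Fin 4 →₀ ℕ}
    (hd : Finsupp.weight sl2Weight d = 0) (r : R) :
    monomial d r ∈ Algebra.adjoin R {X 0 * X 1, X 1 * X 2, X 0 * X 3, X 2 * X 3} := by
  set A := Algebra.adjoin R
    ({X 0 * X 1, X 1 * X 2, X 0 * X 3, X 2 * X 3} : Set (MvPolynomial (Fin 4) R))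
  have hab (n : ℕ) : (X 0 * X 1) ^ n ∈ A := pow_mem (Algebra.subset_adjoin (by simp)) n
  have hbc (n : ℕ) : (X 1 * X 2) ^ n ∈ A := pow_mem (Algebra.subset_adjoin (by simp)) n
  have had (n : ℕ) : (X 0 * X 3) ^ n ∈ A := pow_mem (Algebra.subset_adjoin (by simp)) n
  have hcd (n : ℕ) : (X 2 * X 3) ^ n ∈ A := pow_mem (Algebra.subset_adjoin (by simp)) n
  rw [weight_sl2Weight] at hd
  rw [monomial_eq, Finsupp.prod_fintype _ _ fun _ => pow_zero _, Fin.prod_univ_four, mul_assoc]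
  refine A.mul_mem (A.algebraMap_mem r) ?_
  rcases le_total (d 0) (d 1) with h | h
  · obtain ⟨e, he⟩ := Nat.exists_eq_add_of_le h
    rw [show d 2 = e + d 3 by omega, he]
    convert A.mul_mem (A.mul_mem (hab (d 0)) (hbc e)) (hcd (d 3)) using 1
    ring
  · obtain ⟨e, he⟩ := Nat.exists_eq_add_of_le h
    rw [show d 3 = e + d 2 by omega, he]
    convert A.mul_mem (A.mul_mem (hab (d 1)) (had e)) (hcd (d 2)) using 1
    ring

theorem mem_adjoin_of_isWeightedHomogeneous_zero {p : MvPolynomial (Fin 4) R}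
    (hp : p.IsWeightedHomogeneous sl2Weight 0) :
    p ∈ Algebra.adjoin R {X 0 * X 1, X 1 * X 2, X 0 * X 3, X 2 * X 3} := by
  rw [p.as_sum]
  exact Subalgebra.sum_mem _ fun d hd =>
    monomial_mem_adjoin_of_weight_eq_zero (hp (mem_support_iff.mp hd)) _

theorem isWeightedHomogeneous_sl2Relation :
    (X 0 * X 3 - X 1 * X 2 - 1 : MvPolynomial (Fin 4) R).IsWeightedHomogeneous sl2Weight 0 := by
  have h03 := (isWeightedHomogeneous_X R sl2Weight 0).mul (isWeightedHomogeneous_X R sl2Weight 3)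
  have h12 := (isWeightedHomogeneous_X R sl2Weight 1).mul (isWeightedHomogeneous_X R sl2Weight 2)
  have h1 := isWeightedHomogeneous_one R sl2Weight
  norm_num [sl2Weight] at h03 h12
  rw [← mem_weightedHomogeneousSubmodule] at h03 h12 h1 ⊢
  exact sub_mem (sub_mem h03 h12) h1

end WeightZero

section Invariants

variable (K : Type*) [Field K]

theorem sl2_det : sl2a K * sl2d K - sl2b K * sl2c K = 1 := by
  have h : (Ideal.Quotient.mk _ (X 0 * X 3 - X 1 * X 2 - 1) : SL2Ring K) = 0 :=
    Ideal.Quotient.eq_zero_iff_mem.mpr (Ideal.subset_span rfl)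
  rwa [map_sub, map_sub, map_one, sub_eq_zero, map_mul, map_mul] at h

theorem sl2b_mul_sl2c_eq [NeZero (2 : K)] :
    sl2b K * sl2c K = (2 : K)⁻¹ • (sl2a K * sl2d K + sl2b K * sl2c K - 1) := by
  rw [eq_inv_smul_iff₀ two_ne_zero, two_smul]
  linear_combination -(sl2_det K)

theorem sl2a_mul_sl2d_eq [NeZero (2 : K)] :
    sl2a K * sl2d K = (2 : K)⁻¹ • (sl2a K * sl2d K + sl2b K * sl2c K + 1) := by
  rw [eq_inv_smul_iff₀ two_ne_zero, two_smul]
  linear_combination sl2_det K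

theorem mk_mem_adjoin_of_isWeightedHomogeneous_zero [NeZero (2 : K)]
    {p : MvPolynomial (Fin 4) K} (hp : p.IsWeightedHomogeneous sl2Weight 0) :
    Ideal.Quotient.mk _ p ∈ Algebra.adjoin K
      {sl2a K * sl2b K, sl2c K * sl2d K, sl2a K * sl2d K + sl2b K * sl2c K} := by
  set S := Algebra.adjoin K
    ({sl2a K * sl2b K, sl2c K * sl2d K, sl2a K * sl2d K + sl2b K * sl2c K} : Set (SL2Ring K))
  have hs : sl2a K * sl2d K + sl2b K * sl2c K ∈ S := Algebra.subset_adjoin (by simp)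
  have hle : Algebra.adjoin K {X 0 * X 1, X 1 * X 2, X 0 * X 3, X 2 * X 3} ≤
      S.comap (Ideal.Quotient.mkₐ K _) := by
    refine Algebra.adjoin_le ?_
    rintro _ (rfl | rfl | rfl | rfl) <;> simp only [Subalgebra.coe_comap, Set.mem_preimage,
      Ideal.Quotient.mkₐ_eq_mk, map_mul]
    · exact Algebra.subset_adjoin (by simp)
    · rw [sl2b_mul_sl2c_eq]
      exact S.smul_mem (S.sub_mem hs S.one_mem) _
    · rw [sl2a_mul_sl2d_eq]
      exact S.smul_mem (S.add_mem hs S.one_mem) _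
    · exact Algebra.subset_adjoin (by simp)
  exact hle (mem_adjoin_of_isWeightedHomogeneous_zero hp)

theorem mem_adjoin_of_forall_act_eq [CharZero K] (act : Kˣ →* (SL2Ring K ≃ₐ[K] SL2Ring K))
    (hact : ∀ (l : Kˣ) (p : MvPolynomial (Fin 4) K),
      act l (Ideal.Quotient.mk _ p) = Ideal.Quotient.mk _ (weightScaling sl2Weight l p))
    {r : SL2Ring K} (hr : ∀ l : Kˣ, act l r = r) :
    r ∈ Algebra.adjoin K
      {sl2a K * sl2b K, sl2c K * sl2d K, sl2a K * sl2d K + sl2b K * sl2c K} := by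
  obtain ⟨p, rfl⟩ := Ideal.Quotient.mk_surjective r
  set u : Kˣ := Units.mk0 2 two_ne_zero
  have hu : ∀ n : ℤ, n ≠ 0 → u ^ n ≠ 1 := fun n hn h =>
    two_zpow_ne_one (K := K) hn (by simpa [u] using congrArg Units.val h)
  have hfix : weightScaling sl2Weight u p - p ∈ Ideal.span {X 0 * X 3 - X 1 * X 2 - 1} := by
    rw [← Ideal.Quotient.eq, ← hact]
    exact hr u
  have hI := isHomogeneous_span_singleton_of_isWeightedHomogeneous
    (isWeightedHomogeneous_sl2Relation (R := K))
  have h0 := sub_weightedHomogeneousComponent_zero_mem hI hu hfix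
  rw [Ideal.Quotient.eq.mpr h0]
  exact mk_mem_adjoin_of_isWeightedHomogeneous_zero K
    (weightedHomogeneousComponent_isWeightedHomogeneous _ _)

theorem invariants_eq_adjoin [CharZero K] (act : Kˣ →* (SL2Ring K ≃ₐ[K] SL2Ring K))
    (hacta : ∀ l : Kˣ, act l (sl2a K) = (l : K) • sl2a K)
    (hactb : ∀ l : Kˣ, act l (sl2b K) = ((l : K))⁻¹ • sl2b K)
    (hactc : ∀ l : Kˣ, act l (sl2c K) = (l : K) • sl2c K)
    (hactd : ∀ l : Kˣ, act l (sl2d K) = ((l : K))⁻¹ • sl2d K) :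
    {r : SL2Ring K | ∀ l : Kˣ, act l r = r} =
      Algebra.adjoin K
        {sl2a K * sl2b K, sl2c K * sl2d K, sl2a K * sl2d K + sl2b K * sl2c K} := by
  have hact (l : Kˣ) (p : MvPolynomial (Fin 4) K) :
      act l (Ideal.Quotient.mk _ p) = Ideal.Quotient.mk _ (weightScaling sl2Weight l p) := by
    have h : (act l : SL2Ring K →ₐ[K] SL2Ring K).comp (Ideal.Quotient.mkₐ K _) =
        (Ideal.Quotient.mkₐ K _).comp (weightScaling sl2Weight l) := by
      refine MvPolynomial.algHom_ext fun i => ?_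
      rw [AlgHom.comp_apply, AlgHom.comp_apply, weightScaling, aeval_X, map_smul]
      fin_cases i <;> simp [sl2Weight, hacta, hactb, hactc, hactd]
    exact DFunLike.congr_fun h p
  refine Set.Subset.antisymm (fun r hr => mem_adjoin_of_forall_act_eq K act hact hr)
    fun r hr l => ?_
  refine Algebra.adjoin_le
    (S := AlgHom.equalizer (act l : SL2Ring K →ₐ[K] SL2Ring K) (AlgHom.id K _)) ?_ hr
  rintro _ (rfl | rfl | rfl) <;> simp [hacta, hactb, hactc, hactd, smul_mul_smul_comm]

end Invariants

open Polynomial in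
theorem Polynomial.eq_zero_of_comp_X_add_X_sq {R : Type*} [CommRing R] [IsDomain R]
    (h2 : (2 : R) ≠ 0) {p q : R[X]}
    (h : p.comp (X + X ^ 2) + q.comp (X + X ^ 2) * (1 + 2 * X) = 0) : p = 0 ∧ q = 0 := by
  have comp_eq_zero (f : R[X]) (hf : f.comp (X + X ^ 2) = 0) : f = 0 := by
    refine (comp_eq_zero_iff.mp hf).resolve_right fun ⟨_, hc⟩ => ?_
    simpa using congrArg (coeff · 1) hc
  have hW : (X + X ^ 2 : R[X]).comp (-1 - X) = X + X ^ 2 := by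
    simp only [add_comp, X_comp, pow_comp]
    ring
  have hs : (1 + 2 * X : R[X]).comp (-1 - X) = -(1 + 2 * X) := by
    simp only [add_comp, one_comp, mul_comp, ofNat_comp, X_comp]
    ring
  have h' := congrArg (comp · (-1 - X)) h
  rw [add_comp, mul_comp, comp_assoc, comp_assoc, hW, hs, zero_comp] at h'
  have hp : (2 : R[X]) * p.comp (X + X ^ 2) = 0 := by linear_combination h + h'
  have hp : p.comp (X + X ^ 2) = 0 :=
    (mul_eq_zero.mp hp).resolve_left (by simpa [← C_ofNat] using h2)
  rw [hp, zero_add] at h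
  have hq : q.comp (X + X ^ 2) = 0 :=
    (mul_eq_zero.mp h).resolve_right fun h1 => by simpa using congrArg (eval 0) h1
  exact ⟨comp_eq_zero p hp, comp_eq_zero q hq⟩

section Injectivity

open LaurentPolynomial (T)

variable (K : Type*) [Field K]

noncomputable def xyToLaurent : MvPolynomial (Fin 2) K →ₐ[K] Polynomial (LaurentPolynomial K) :=
  aeval ![Polynomial.C (T 1), Polynomial.C (T (-1)) * Polynomial.X]

theorem xyToLaurent_monomial (d : Fin 2 →₀ ℕ) (k : K) :
    xyToLaurent K (monomial d k) =
      Polynomial.monomial (d 1) (AddMonoidAlgebra.single ((d 0 : ℤ) - d 1) k) := by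
  rw [xyToLaurent, aeval_monomial, Finsupp.prod_fintype _ _ fun _ => pow_zero _,
    Fin.prod_univ_two]
  simp only [Matrix.cons_val_zero, Matrix.cons_val_one, mul_pow, ← map_pow,
    LaurentPolynomial.T_pow, mul_one, mul_neg, Polynomial.algebraMap_apply,
    ← LaurentPolynomial.C_eq_algebraMap]
  rw [← Polynomial.C_mul_X_pow_eq_monomial, LaurentPolynomial.single_eq_C_mul_T,
    LaurentPolynomial.T_sub, map_mul, map_mul]
  ring

theorem coeff_xyToLaurent (r : MvPolynomial (Fin 2) K) (d : Fin 2 →₀ ℕ) :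
    ((xyToLaurent K r).coeff (d 1)).coeff ((d 0 : ℤ) - d 1) = coeff d r := by
  induction r using MvPolynomial.induction_on' with
  | monomial e k =>
    rw [xyToLaurent_monomial, Polynomial.coeff_monomial, coeff_monomial]
    by_cases he : e = d
    · subst he
      rw [if_pos rfl, if_pos rfl, AddMonoidAlgebra.coeff_single, Finsupp.single_eq_same]
    rw [if_neg he]
    split_ifs with h1
    · rw [AddMonoidAlgebra.coeff_single, Finsupp.single_apply, if_neg]
      exact fun h0 => he (Finsupp.ext (Fin.forall_fin_two.mpr ⟨by omega, by omega⟩))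
    · rfl
  | add p q hp hq =>
    rw [map_add, Polynomial.coeff_add, AddMonoidAlgebra.coeff_add, Finsupp.add_apply, hp, hq,
      coeff_add]

theorem xyToLaurent_injective : Function.Injective (xyToLaurent K) :=
  (injective_iff_map_eq_zero _).mpr fun r hr => MvPolynomial.ext _ _ fun d => by
    rw [← coeff_xyToLaurent, hr]
    rfl

noncomputable def xyzToSL2 : XYZRing K →ₐ[K] SL2Ring K :=
  Ideal.Quotient.liftₐ _
    (aeval ![sl2a K * sl2b K, sl2c K * sl2d K, sl2a K * sl2d K + sl2b K * sl2c K]) fun q hq => by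
      obtain ⟨c, rfl⟩ := Ideal.mem_span_singleton'.mp hq
      refine (map_mul _ _ _).trans (mul_eq_zero_of_right _ ?_)
      simp only [map_sub, map_mul, map_pow, map_ofNat, map_one, aeval_X, Matrix.cons_val]
      linear_combination (sl2a K * sl2d K - sl2b K * sl2c K + 1) * sl2_det K

theorem xyzToSL2_mk (q : MvPolynomial (Fin 3) K) :
    xyzToSL2 K (Ideal.Quotient.mk _ q) =
      aeval ![sl2a K * sl2b K, sl2c K * sl2d K, sl2a K * sl2d K + sl2b K * sl2c K] q :=
  rfl

theorem range_xyzToSL2 :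
    (xyzToSL2 K).range =
      Algebra.adjoin K {sl2a K * sl2b K, sl2c K * sl2d K, sl2a K * sl2d K + sl2b K * sl2c K} := by
  have h : (xyzToSL2 K).comp (Ideal.Quotient.mkₐ K _) =
      aeval ![sl2a K * sl2b K, sl2c K * sl2d K, sl2a K * sl2d K + sl2b K * sl2c K] :=
    AlgHom.ext fun _ => rfl
  rw [← Algebra.map_top, ← (AlgHom.range_eq_top _).mpr (Ideal.Quotient.mkₐ_surjective K _),
    ← AlgHom.range_comp, h, ← Algebra.adjoin_range_eq_range_aeval, Matrix.range_cons,
    Matrix.range_cons, Matrix.range_cons, Matrix.range_empty, Set.union_empty,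
    Set.singleton_union, Set.singleton_union]

theorem XYZRing.exists_eq_add_mul (u : XYZRing K) : ∃ r₀ r₁ : MvPolynomial (Fin 2) K,
    u = Ideal.Quotient.mk _ (rename Fin.castSucc r₀) +
      Ideal.Quotient.mk _ (rename Fin.castSucc r₁) * Ideal.Quotient.mk _ (X 2) := by
  obtain ⟨q, rfl⟩ := Ideal.Quotient.mk_surjective u
  induction q using MvPolynomial.induction_on with
  | C k => exact ⟨C k, 0, by simp⟩
  | add p q hp hq =>
    obtain ⟨r₀, r₁, hr⟩ := hp
    obtain ⟨s₀, s₁, hs⟩ := hq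
    exact ⟨r₀ + s₀, r₁ + s₁, by rw [map_add, hr, hs]; simp only [map_add]; ring⟩
  | mul_X p i hp =>
    obtain ⟨r₀, r₁, hr⟩ := hp
    fin_cases i <;> simp only [Fin.reduceFinMk, Fin.isValue]
    · exact ⟨r₀ * X 0, r₁ * X 0, by simp only [map_mul, hr, rename_X, Fin.castSucc_zero]; ring⟩
    · exact ⟨r₀ * X 1, r₁ * X 1, by simp only [map_mul, hr, rename_X, Fin.castSucc_one]; ring⟩
    · have hz : (Ideal.Quotient.mk _ (X 2 ^ 2 - 4 * (X 0 * X 1) - 1) : XYZRing K) = 0 :=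
        Ideal.Quotient.eq_zero_iff_mem.mpr (Ideal.subset_span rfl)
      refine ⟨r₁ * (1 + 4 * (X 0 * X 1)), r₀, ?_⟩
      simp only [map_mul, map_add, map_one, map_ofNat, map_sub, map_pow, hr, rename_X,
        Fin.castSucc_zero, Fin.castSucc_one] at hz ⊢
      linear_combination (Ideal.Quotient.mk _ (rename Fin.castSucc r₁)) * hz

theorem C_T_one_mul_C_T_neg_one :
    (Polynomial.C (T 1) * Polynomial.C (T (-1)) : Polynomial (LaurentPolynomial K)) = 1 := by
  rw [← map_mul, ← LaurentPolynomial.T_add, add_neg_cancel, LaurentPolynomial.T_zero, map_one]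

noncomputable def sl2Point : SL2Ring K →ₐ[K] Polynomial (LaurentPolynomial K) :=
  Ideal.Quotient.liftₐ _
    (aeval ![Polynomial.C (T 1), 1, Polynomial.X, Polynomial.C (T (-1)) * (1 + Polynomial.X)])
    fun q hq => by
      obtain ⟨c, rfl⟩ := Ideal.mem_span_singleton'.mp hq
      refine (map_mul _ _ _).trans (mul_eq_zero_of_right _ ?_)
      simp only [map_sub, map_mul, map_one, aeval_X, Matrix.cons_val]
      linear_combination (1 + Polynomial.X) * C_T_one_mul_C_T_neg_one K

theorem sl2Point_mk (p : MvPolynomial (Fin 4) K) :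
    sl2Point K (Ideal.Quotient.mk _ p) = aeval ![Polynomial.C (T (R := K) 1), 1, Polynomial.X,
      Polynomial.C (T (-1)) * (1 + Polynomial.X)] p :=
  rfl

theorem sl2Point_xyzToSL2_mk_rename (r : MvPolynomial (Fin 2) K) :
    sl2Point K (xyzToSL2 K (Ideal.Quotient.mk _ (rename Fin.castSucc r))) =
      (xyToLaurent K r).comp (Polynomial.X + Polynomial.X ^ 2) := by
  have h : (sl2Point K).comp
      ((xyzToSL2 K).comp ((Ideal.Quotient.mkₐ K _).comp (rename Fin.castSucc))) =
      ((Polynomial.aeval (Polynomial.X + Polynomial.X ^ 2)).restrictScalars K).comp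
        (xyToLaurent K) := by
    refine MvPolynomial.algHom_ext fun i => ?_
    fin_cases i
    · simp [sl2Point_mk, xyzToSL2_mk, xyToLaurent]
    · simp only [Fin.mk_one, AlgHom.coe_comp, Ideal.Quotient.mkₐ_eq_mk, Function.comp_apply,
        rename_X, Fin.castSucc_one, xyzToSL2_mk, sl2Point_mk, xyToLaurent, aeval_X, map_mul,
        Matrix.cons_val_zero, Matrix.cons_val_one, Matrix.cons_val, Matrix.cons_val_fin_one,
        AlgHom.coe_restrictScalars', Polynomial.aeval_C, Polynomial.algebraMap_eq,
        Polynomial.aeval_X]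
      ring
  rw [Polynomial.comp_eq_aeval]
  exact DFunLike.congr_fun h r

theorem sl2Point_xyzToSL2_mk_X_two :
    sl2Point K (xyzToSL2 K (Ideal.Quotient.mk _ (X 2))) = 1 + 2 * Polynomial.X := by
  simp only [xyzToSL2_mk, sl2Point_mk, aeval_X, map_add, map_mul, Matrix.cons_val,
    Matrix.cons_val_zero, Matrix.cons_val_one, one_mul]
  linear_combination (1 + Polynomial.X) * C_T_one_mul_C_T_neg_one K

theorem xyzToSL2_injective [NeZero (2 : K)] : Function.Injective (xyzToSL2 K) := by
  refine (injective_iff_map_eq_zero _).mpr fun u hu => ?_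
  obtain ⟨r₀, r₁, rfl⟩ := XYZRing.exists_eq_add_mul K u
  have h := congrArg (sl2Point K) hu
  rw [map_add, map_mul, map_add, map_mul, sl2Point_xyzToSL2_mk_rename,
    sl2Point_xyzToSL2_mk_rename, sl2Point_xyzToSL2_mk_X_two, map_zero] at h
  have h2 : (2 : LaurentPolynomial K) ≠ 0 := by
    simpa only [map_ofNat, map_zero] using
      (algebraMap K (LaurentPolynomial K)).injective.ne (two_ne_zero (α := K))
  obtain ⟨h₀, h₁⟩ := Polynomial.eq_zero_of_comp_X_add_X_sq h2 h
  rw [(injective_iff_map_eq_zero _).mp (xyToLaurent_injective K) r₀ h₀,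
    (injective_iff_map_eq_zero _).mp (xyToLaurent_injective K) r₁ h₁]
  simp

end Injectivity

/-- Let `R = K[a,b,c,d]/(ad − bc − 1)` with the `Kˣ`-action
`λ·a = λa, λ·b = λ⁻¹b, λ·c = λc, λ·d = λ⁻¹d` by `K`-algebra automorphisms.  Then the invariant
subalgebra `R^{Kˣ}` equals the `K`-subalgebra generated by `ab`, `cd` and `ad + bc`, and the
`K`-algebra homomorphism `K[x,y,z]/(z² − 4xy − 1) → R`, `x ↦ ab`, `y ↦ cd`, `z ↦ ad + bc`, is
injective with image `R^{Kˣ}`; in particular `R^{Kˣ} ≅ K[x,y,z]/(z² − 4xy − 1)`. -/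
theorem stmt_14 {K : Type*} [Field K] [CharZero K]
    (act : Kˣ →* (SL2Ring K ≃ₐ[K] SL2Ring K))
    (hacta : ∀ l : Kˣ, act l (sl2a K) = (l : K) • sl2a K)
    (hactb : ∀ l : Kˣ, act l (sl2b K) = ((l : K))⁻¹ • sl2b K)
    (hactc : ∀ l : Kˣ, act l (sl2c K) = (l : K) • sl2c K)
    (hactd : ∀ l : Kˣ, act l (sl2d K) = ((l : K))⁻¹ • sl2d K)
    (ψ : XYZRing K →ₐ[K] SL2Ring K)
    (hψx : ψ (Ideal.Quotient.mk _ (X 0)) = sl2a K * sl2b K)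
    (hψy : ψ (Ideal.Quotient.mk _ (X 1)) = sl2c K * sl2d K)
    (hψz : ψ (Ideal.Quotient.mk _ (X 2)) = sl2a K * sl2d K + sl2b K * sl2c K) :
    ({r : SL2Ring K | ∀ l : Kˣ, act l r = r} =
      (Algebra.adjoin K
        ({sl2a K * sl2b K, sl2c K * sl2d K, sl2a K * sl2d K + sl2b K * sl2c K} :
          Set (SL2Ring K)) : Set (SL2Ring K))) ∧
    Function.Injective ψ ∧
    Set.range ψ = {r : SL2Ring K | ∀ l : Kˣ, act l r = r} := by
  obtain rfl : ψ = xyzToSL2 K := Ideal.Quotient.algHom_ext K <| MvPolynomial.algHom_ext fun i => by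
    fin_cases i <;> simp [hψx, hψy, hψz, xyzToSL2_mk]
  have hinv := invariants_eq_adjoin K act hacta hactb hactc hactd
  refine ⟨hinv, xyzToSL2_injective K, ?_⟩
  rw [hinv, ← range_xyzToSL2, AlgHom.coe_range]
end

section
/- Let v₁ : M → ℤ be a group homomorphism, v₀ : M → ℚ a map with 2v₀ a group homomorphism M → ℤ, and e ∈ M with 2v₀(e) = 1 and v₁(e) = −1. Let ∂₋^{sk}, ∂₊^{sk} be the skew derivations of K(t)[M] attached to (v₀, v₁, e), and let ∂₋^{re}, ∂₊^{re} be the reflexive derivations of K(t)[M] attached to the data (ṽ₀, ṽ₁, e) = (−v₁, v₁, e). Define φ : K(t)[M] → K(t)[M] by φ(Qχ^m) = Q((2t−1)²)·t^{v₁(m)}·(t − 1/2)^{2v₀(m)}·χ^m, where Q((2t−1)²) denotes the rational function Q evaluated at (2t−1)². Then φ is an injective K-algebra homomorphism satisfying ∂₋^{re}∘φ = φ∘∂₋^{sk} and ∂₊^{re}∘φ = φ∘∂₊^{sk}. -/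
/-!
The map `φ` is the substitution `Q ↦ Q((2t-1)²)` on coefficients, twisted by the character
`m ↦ t^{v₁(m)} (t - 1/2)^{2v₀(m)}` of `M` with values in `K(t)ˣ`; this makes it an injective
`K`-algebra map. Both sides of each intertwining relation are additive, so it suffices to
compare them on monomials `Qχ^m`. There the chain rule `(Q((2t-1)²))′ = 8 (t - 1/2) Q′((2t-1)²)`
and the logarithmic derivative `a/t + b/(t - 1/2)` of `t^a (t - 1/2)^b`, together with
`2v₀(e) = 1` and `v₁(e) = -1`, reduce the relation to an identity of rational functions.
-/

open AddMonoidAlgebra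

theorem Derivation.leibniz_zpow_eq_div {R F : Type*} [CommRing R] [Field F] [Algebra R F]
    (D : Derivation R F F) (a : F) (n : ℤ) : D (a ^ n) = n / a * a ^ n * D a := by
  rcases eq_or_ne a 0 with rfl | ha
  · rw [zero_zpow_eq]
    split_ifs <;> simp
  · rw [Derivation.leibniz_zpow, zpow_sub_one₀ ha, smul_eq_mul, zsmul_eq_mul]
    ring

namespace RatFunc

variable {K : Type*} [Field K]

theorem derivation_algHom_apply (D : Derivation K (RatFunc K) (RatFunc K)) (hD : D X = 1)
    (σ : RatFunc K →ₐ[K] RatFunc K) (Q : RatFunc K) : D (σ Q) = σ (D Q) * D (σ X) := by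
  have hpoly (p : Polynomial K) :
      D (σ (algebraMap _ (RatFunc K) p)) = σ (D (algebraMap _ (RatFunc K) p)) * D (σ X) := by
    rw [← aeval_X_left_eq_algebraMap, ← Polynomial.aeval_algHom_apply, Derivation.map_aeval,
      Derivation.map_aeval, hD, smul_eq_mul, smul_eq_mul, mul_one, Polynomial.aeval_algHom_apply]
  induction Q using RatFunc.induction_on with
  | f p q =>
    simp only [map_div₀, Derivation.leibniz_div, smul_eq_mul, map_mul, map_sub, map_pow,
      map_inv₀, hpoly]
    ring

theorem X_sub_inv_two_ne_zero : (X - 2⁻¹ : RatFunc K) ≠ 0 := by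
  rw [← map_ofNat C 2, ← map_inv₀, ← algebraMap_X, ← algebraMap_C, ← map_sub]
  exact algebraMap_ne_zero (Polynomial.X_sub_C_ne_zero _)

section

variable {D : Derivation K (RatFunc K) (RatFunc K)} (hD : D X = 1)
include hD

theorem derivation_X_sub_inv_two : D (X - 2⁻¹) = 1 := by
  rw [map_sub, hD, ← map_ofNat (algebraMap K (RatFunc K)) 2, ← map_inv₀, D.map_algebraMap,
    sub_zero]

theorem derivation_X_zpow_mul_X_sub_inv_two_zpow (a b : ℤ) :
    D (X ^ a * (X - 2⁻¹) ^ b) =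
      ((a : RatFunc K) / X + (b : RatFunc K) / (X - 2⁻¹)) * (X ^ a * (X - 2⁻¹) ^ b) := by
  rw [Derivation.leibniz, smul_eq_mul, smul_eq_mul, D.leibniz_zpow_eq_div, D.leibniz_zpow_eq_div,
    hD, derivation_X_sub_inv_two hD]
  ring

variable [CharZero K] {σ : RatFunc K →ₐ[K] RatFunc K} (hσ : σ X = (2 * X - 1) ^ 2)
include hσ

theorem derivation_algHom_apply_of_map_X_eq_sq (Q : RatFunc K) :
    D (σ Q) = 8 * (X - 2⁻¹) * σ (D Q) := by
  have hD2 : D (2 : RatFunc K) = 0 := by exact_mod_cast D.map_natCast 2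
  rw [derivation_algHom_apply D hD, hσ]
  simp only [Derivation.leibniz_pow, map_sub, Derivation.leibniz, hD, hD2,
    Derivation.map_one_eq_zero, smul_eq_mul, nsmul_eq_mul]
  field_simp
  ring

theorem reflexive_minus_twist_coeff_eq (Q : RatFunc K) (a b : ℤ) (q : ℚ) (hb : (b : ℚ) = 2 * q) :
    ((-a : ℤ) : RatFunc K) * (σ Q * (X ^ a * (X - 2⁻¹) ^ b)) +
        X * D (σ Q * (X ^ a * (X - 2⁻¹) ^ b)) =
      σ (2 * ((q : RatFunc K) * Q + X * D Q)) * (X ^ (a + 1) * (X - 2⁻¹) ^ (b - 1)) := by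
  have hX : (X : RatFunc K) ≠ 0 := X_ne_zero
  have hY : (X - 2⁻¹ : RatFunc K) ≠ 0 := X_sub_inv_two_ne_zero
  -- the form in which `field_simp` needs the denominator `X - 2⁻¹`
  have hY' : (X * 2 - 1 : RatFunc K) ≠ 0 := by contrapose! hY; linear_combination hY / 2
  have hbq : (b : RatFunc K) = 2 * q := by exact_mod_cast hb
  rw [Derivation.leibniz, smul_eq_mul, smul_eq_mul, derivation_algHom_apply_of_map_X_eq_sq hD hσ,
    derivation_X_zpow_mul_X_sub_inv_two_zpow hD, zpow_add_one₀ hX, zpow_sub_one₀ hY]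
  simp only [map_mul, map_add, map_ofNat, map_ratCast, hσ, Int.cast_neg, hbq]
  field_simp
  ring

theorem reflexive_plus_twist_coeff_eq (Q : RatFunc K) (a b : ℤ) (q : ℚ) (hb : (b : ℚ) = 2 * q) :
    (a : RatFunc K) * (σ Q * (X ^ a * (X - 2⁻¹) ^ b)) +
        (X - 1) * D (σ Q * (X ^ a * (X - 2⁻¹) ^ b)) =
      σ (2 * (((q : RatFunc K) * (1 - X⁻¹) + (a : RatFunc K)) * Q + (X - 1) * D Q)) *
        (X ^ (a - 1) * (X - 2⁻¹) ^ (b + 1)) := by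
  have hX : (X : RatFunc K) ≠ 0 := X_ne_zero
  have hY : (X - 2⁻¹ : RatFunc K) ≠ 0 := X_sub_inv_two_ne_zero
  have hY' : (X * 2 - 1 : RatFunc K) ≠ 0 := by contrapose! hY; linear_combination hY / 2
  have hbq : (b : RatFunc K) = 2 * q := by exact_mod_cast hb
  rw [Derivation.leibniz, smul_eq_mul, smul_eq_mul, derivation_algHom_apply_of_map_X_eq_sq hD hσ,
    derivation_X_zpow_mul_X_sub_inv_two_zpow hD, zpow_sub_one₀ hX, zpow_add_one₀ hY]
  simp only [map_mul, map_add, map_sub, map_one, map_inv₀, map_intCast, map_ofNat, map_ratCast,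
    hσ, hbq]
  field_simp
  ring

end

end RatFunc

namespace AddMonoidAlgebra

variable {K R M : Type*} [CommSemiring K] [CommSemiring R] [Algebra K R] [AddCommMonoid M]

theorem derivation_algHom_apply_eq_of_single {Φ : R[M] →ₐ[K] R[M]}
    {D₁ D₂ : Derivation K R[M] R[M]}
    (h : ∀ m r, D₁ (Φ (single m r)) = Φ (D₂ (single m r))) (f : R[M]) :
    D₁ (Φ f) = Φ (D₂ f) := by
  induction f using induction_linear with
  | zero => simp
  | add f g hf hg => simp only [map_add, hf, hg]
  | single m r => exact h m r

noncomputable def twist (σ : R →ₐ[K] R) (χ : Multiplicative M →* Rˣ) : R[M] →ₐ[K] R[M] :=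
  liftNCAlgHom (singleZeroAlgHom.comp σ)
    (of R M * (singleZeroAlgHom : R →ₐ[K] R[M]).toMonoidHom.comp ((Units.coeHom R).comp χ))
    fun _ _ => Commute.all _ _

variable (σ : R →ₐ[K] R) (χ : Multiplicative M →* Rˣ)

@[simp]
theorem twist_single (m : M) (r : R) :
    twist σ χ (single m r) = single m (σ r * χ (.ofAdd m)) := by
  simp [twist, single_mul_single]

theorem coeff_twist (f : R[M]) (m : M) :
    (twist σ χ f).coeff m = σ (f.coeff m) * χ (.ofAdd m) := by
  classical
  induction f using induction_linear with
  | zero => simp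
  | add f g hf hg => simp [coeff_add, hf, hg, add_mul]
  | single m' r => by_cases h : m' = m <;> simp [h]

theorem twist_injective (hσ : Function.Injective σ) : Function.Injective (twist σ χ) := by
  intro f g h
  ext m
  have hm := congrArg (fun x => x.coeff m) h
  simp only [coeff_twist] at hm
  exact hσ ((χ _).isUnit.mul_left_injective hm)

end AddMonoidAlgebra

theorem stmt_17_general {K : Type*} [Field K] [CharZero K]
    {M : Type*} [AddCommGroup M]
    (D : Derivation K (RatFunc K) (RatFunc K)) (hD : D RatFunc.X = 1)
    (v₀ : M →+ ℚ) (w : M →+ ℤ) (hw : ∀ m : M, (w m : ℚ) = 2 * v₀ m)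
    (v₁ : M →+ ℤ) (e : M) (hv₀e : 2 * v₀ e = 1) (hv₁e : v₁ e = -1)
    (Dsm Dsp : Derivation K (AddMonoidAlgebra (RatFunc K) M) (AddMonoidAlgebra (RatFunc K) M))
    (hDsm : ∀ (Q : RatFunc K) (m : M), Dsm (AddMonoidAlgebra.single m Q) =
      AddMonoidAlgebra.single (m - e)
        (2 * (((v₀ m : ℚ) : RatFunc K) * Q + RatFunc.X * D Q)))
    (hDsp : ∀ (Q : RatFunc K) (m : M), Dsp (AddMonoidAlgebra.single m Q) =
      AddMonoidAlgebra.single (m + e)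
        (2 * ((((v₀ m : ℚ) : RatFunc K) * (1 - RatFunc.X⁻¹) + (v₁ m : RatFunc K)) * Q +
          (RatFunc.X - 1) * D Q)))
    (Drm Drp : Derivation K (AddMonoidAlgebra (RatFunc K) M) (AddMonoidAlgebra (RatFunc K) M))
    (hDrm : ∀ (Q : RatFunc K) (m : M), Drm (AddMonoidAlgebra.single m Q) =
      AddMonoidAlgebra.single (m - e) (((-(v₁ m) : ℤ) : RatFunc K) * Q + RatFunc.X * D Q))
    (hDrp : ∀ (Q : RatFunc K) (m : M), Drp (AddMonoidAlgebra.single m Q) =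
      AddMonoidAlgebra.single (m + e) ((v₁ m : RatFunc K) * Q + (RatFunc.X - 1) * D Q))
    (sub : RatFunc K →ₐ[K] RatFunc K)
    (hsub : sub RatFunc.X = (2 * RatFunc.X - 1) ^ 2) :
    ∃ Φ : AddMonoidAlgebra (RatFunc K) M →ₐ[K] AddMonoidAlgebra (RatFunc K) M,
      (∀ (Q : RatFunc K) (m : M), Φ (AddMonoidAlgebra.single m Q) =
        AddMonoidAlgebra.single m
          (sub Q * RatFunc.X ^ (v₁ m) * (RatFunc.X - (2 : RatFunc K)⁻¹) ^ (w m))) ∧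
      Function.Injective Φ ∧
      (∀ f, Drm (Φ f) = Φ (Dsm f)) ∧
      (∀ f, Drp (Φ f) = Φ (Dsp f)) := by
  let χ : Multiplicative M →* (RatFunc K)ˣ :=
    (zpowersHom _ (Units.mk0 _ RatFunc.X_ne_zero)).comp v₁.toMultiplicative *
      (zpowersHom _ (Units.mk0 _ RatFunc.X_sub_inv_two_ne_zero)).comp w.toMultiplicative
  have hΦ (Q : RatFunc K) (m : M) : twist sub χ (single m Q) =
      single m (sub Q * (RatFunc.X ^ v₁ m * (RatFunc.X - 2⁻¹) ^ w m)) := by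
    simp [χ]
  have hwe : w e = 1 := by exact_mod_cast (hw e).trans hv₀e
  refine ⟨twist sub χ, fun Q m => by rw [hΦ, mul_assoc], twist_injective sub χ sub.injective,
    derivation_algHom_apply_eq_of_single fun m Q => ?_,
    derivation_algHom_apply_eq_of_single fun m Q => ?_⟩
  · rw [hΦ, hDrm, hDsm, hΦ, map_sub, map_sub, hv₁e, hwe, sub_neg_eq_add]
    exact congrArg (single _) (RatFunc.reflexive_minus_twist_coeff_eq hD hsub Q _ _ _ (hw m))
  · rw [hΦ, hDrp, hDsp, hΦ, map_add, map_add, hv₁e, hwe, ← sub_eq_add_neg]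
    exact congrArg (single _) (RatFunc.reflexive_plus_twist_coeff_eq hD hsub Q _ _ _ (hw m))

/-- Let `v₁ : M → ℤ` be a homomorphism, `v₀ : M → ℚ` with `2v₀` a
homomorphism into `ℤ` (realized by `w : M → ℤ` with `w = 2v₀`), and `e ∈ M` with `2v₀(e) = 1`,
`v₁(e) = −1`.  Let `∂₋ˢᵏ, ∂₊ˢᵏ` be the skew derivations of `K(t)[M]` attached to `(v₀,v₁,e)`
and `∂₋ʳᵉ, ∂₊ʳᵉ` the reflexive derivations attached to `(−v₁, v₁, e)`.  The map
`φ(Qχ^m) = Q((2t−1)²)·t^{v₁(m)}·(t − 1/2)^{2v₀(m)}·χ^m` (where `Q ↦ Q((2t−1)²)` is the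
`K`-algebra endomorphism `sub` of `K(t)` with `sub(t) = (2t−1)²`) is an injective `K`-algebra
homomorphism with `∂₋ʳᵉ∘φ = φ∘∂₋ˢᵏ` and `∂₊ʳᵉ∘φ = φ∘∂₊ˢᵏ`. -/
theorem stmt_17 {K : Type*} [Field K] [CharZero K]
    {M : Type*} [AddCommGroup M] [Module.Free ℤ M] [Module.Finite ℤ M]
    (D : Derivation K (RatFunc K) (RatFunc K)) (hD : D RatFunc.X = 1)
    (v₀ : M →+ ℚ) (w : M →+ ℤ) (hw : ∀ m : M, (w m : ℚ) = 2 * v₀ m)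
    (v₁ : M →+ ℤ) (e : M) (hv₀e : 2 * v₀ e = 1) (hv₁e : v₁ e = -1)
    (Dsm Dsp : Derivation K (AddMonoidAlgebra (RatFunc K) M) (AddMonoidAlgebra (RatFunc K) M))
    (hDsm : ∀ (Q : RatFunc K) (m : M), Dsm (AddMonoidAlgebra.single m Q) =
      AddMonoidAlgebra.single (m - e)
        (2 * (((v₀ m : ℚ) : RatFunc K) * Q + RatFunc.X * D Q)))
    (hDsp : ∀ (Q : RatFunc K) (m : M), Dsp (AddMonoidAlgebra.single m Q) =
      AddMonoidAlgebra.single (m + e)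
        (2 * ((((v₀ m : ℚ) : RatFunc K) * (1 - RatFunc.X⁻¹) + (v₁ m : RatFunc K)) * Q +
          (RatFunc.X - 1) * D Q)))
    (Drm Drp : Derivation K (AddMonoidAlgebra (RatFunc K) M) (AddMonoidAlgebra (RatFunc K) M))
    (hDrm : ∀ (Q : RatFunc K) (m : M), Drm (AddMonoidAlgebra.single m Q) =
      AddMonoidAlgebra.single (m - e) (((-(v₁ m) : ℤ) : RatFunc K) * Q + RatFunc.X * D Q))
    (hDrp : ∀ (Q : RatFunc K) (m : M), Drp (AddMonoidAlgebra.single m Q) =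
      AddMonoidAlgebra.single (m + e) ((v₁ m : RatFunc K) * Q + (RatFunc.X - 1) * D Q))
    (sub : RatFunc K →ₐ[K] RatFunc K)
    (hsub : sub RatFunc.X = (2 * RatFunc.X - 1) ^ 2) :
    ∃ Φ : AddMonoidAlgebra (RatFunc K) M →ₐ[K] AddMonoidAlgebra (RatFunc K) M,
      (∀ (Q : RatFunc K) (m : M), Φ (AddMonoidAlgebra.single m Q) =
        AddMonoidAlgebra.single m
          (sub Q * RatFunc.X ^ (v₁ m) * (RatFunc.X - (2 : RatFunc K)⁻¹) ^ (w m))) ∧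
      Function.Injective Φ ∧
      (∀ f, Drm (Φ f) = Φ (Dsm f)) ∧
      (∀ f, Drp (Φ f) = Φ (Dsp f)) :=
  stmt_17_general D hD v₀ w hw v₁ e hv₀e hv₁e Dsm Dsp hDsm hDsp Drm Drp hDrm hDrp sub hsub
end
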